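/- arXiv:1812.03748 — 7 statements merged into one kernel-verified Lean document; each statement's English description precedes it below -/
import Mathlib

section
/- Let u be a binary sequence and v a binary sequence with u_i = v_i + v_{i+1} mod 2 for all i ∈ ℕ. Then for every m ∈ ℕ, the index m is an occurrence of the prefix x = v_0...v_{n} of v (of length n+1) in v if and only if m is an occurrence of the prefix w = u_0...u_{n-1} of u in u and the prefix u_0 u_1 ... u_{m-1} of u contains an even number of 1's. -/
lemma zmod2_aba : ∀ a b : ZMod 2, a + b + a = b := by decide
lemma zmod2_tel : ∀ a b c : ZMod 2, a + b + (b + c) = a + c := by decide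
lemma zmod2_self : ∀ a : ZMod 2, a + a = 0 := by decide
lemma zmod2_add_eq_zero : ∀ a b : ZMod 2, a + b = 0 ↔ b = a := by decide

lemma sum_u_eq (u v : ℕ → ZMod 2) (h : ∀ i, u i = v i + v (i + 1)) (m : ℕ) :
    ∑ j ∈ Finset.range m, u j = v 0 + v m := by
  induction m with
  | zero => simp [zmod2_self]
  | succ m ih => rw [Finset.sum_range_succ, ih, h m, zmod2_tel]

lemma card_filter_cast (u : ℕ → ZMod 2) (m : ℕ) :
    ((((Finset.range m).filter (fun j => u j = 1)).card : ℕ) : ZMod 2)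
      = ∑ j ∈ Finset.range m, u j := by
  rw [Finset.card_filter]
  push_cast
  refine Finset.sum_congr rfl fun j _ => ?_
  rcases (by decide : ∀ x : ZMod 2, x = 0 ∨ x = 1) (u j) with h0 | h0 <;> simp [h0]

lemma even_iff_vm (u v : ℕ → ZMod 2) (h : ∀ i, u i = v i + v (i + 1)) (m : ℕ) :
    Even (((Finset.range m).filter (fun j => u j = 1)).card) ↔ v m = v 0 := by
  have key : ((((Finset.range m).filter (fun j => u j = 1)).card : ℕ) : ZMod 2)
      = v 0 + v m := by rw [card_filter_cast, sum_u_eq u v h]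
  rw [Nat.even_iff, ← Nat.dvd_iff_mod_eq_zero, ← ZMod.natCast_eq_zero_iff,
    key, zmod2_add_eq_zero]

/-- let `u`, `v` be binary sequences with `uᵢ = vᵢ + v_{i+1} (mod 2)`.
Then `m` is an occurrence of the length-`(n+1)` prefix of `v` in `v` iff `m` is an
occurrence of the length-`n` prefix of `u` in `u` and the prefix `u₀⋯u_{m-1}` of `u`
contains an even number of `1`'s (is stable). -/
theorem occurrence_iff_stable (u v : ℕ → ZMod 2)
    (h : ∀ i, u i = v i + v (i + 1)) (n m : ℕ) :
    (∀ j ≤ n, v (m + j) = v j) ↔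
      ((∀ j < n, u (m + j) = u j) ∧
        Even (((Finset.range m).filter (fun j => u j = 1)).card)) := by
  have succ_eq : ∀ i, v (i + 1) = u i + v i := by
    intro i
    rw [h i, add_comm (v i), add_assoc, zmod2_self, add_zero]
  constructor
  · intro hv
    refine ⟨fun j hj => ?_, (even_iff_vm u v h m).2 (by simpa using hv 0 (Nat.zero_le n))⟩
    rw [h (m + j), h j, show m + j + 1 = m + (j + 1) by ring,
      hv j (le_of_lt hj), hv (j + 1) hj]
  · rintro ⟨hu, hev⟩
    have h0 : v m = v 0 := (even_iff_vm u v h m).1 hev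
    intro j hj
    induction j with
    | zero => simpa using h0
    | succ j ih =>
      rw [show m + (j + 1) = (m + j) + 1 by ring, succ_eq, succ_eq,
        hu j (by omega), ih (by omega)]
end

section
/- Let v be a complementary symmetric Rote sequence and u = S(v) the associated Sturmian sequence. If w is a bispecial factor of u of length ℓ, then both words x and E(x) of length ℓ+1 with S(x) = w are bispecial factors of v. Conversely, if x is a bispecial factor of v of length ℓ+1, then S(x) is a bispecial factor of u of length ℓ. -/
/-- Words over the binary alphabet `{0,1}`, represented as `ZMod 2`. -/
abbrev Word := List (ZMod 2)

/-- The difference map `S`. -/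
def Sdiff (v : Word) : Word := List.zipWith (· + ·) v v.tail

/-- The letter-exchange morphism `E`. -/
def Ex (v : Word) : Word := v.map (· + 1)

/-- `m` is an occurrence of the word `w` in the sequence `s`. -/
def OccAt (s : ℕ → ZMod 2) (w : Word) (m : ℕ) : Prop :=
  w = List.ofFn fun i : Fin w.length => s (m + i)

/-- `w` is a factor of the sequence `s`. -/
def IsFactor (s : ℕ → ZMod 2) (w : Word) : Prop := ∃ m, OccAt s w m

/-- `w` is a left special factor of `s`. -/
def LeftSpecial (s : ℕ → ZMod 2) (w : Word) : Prop :=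
  IsFactor s ((0 : ZMod 2) :: w) ∧ IsFactor s ((1 : ZMod 2) :: w)

/-- `w` is a right special factor of `s`. -/
def RightSpecial (s : ℕ → ZMod 2) (w : Word) : Prop :=
  IsFactor s (w ++ [(0 : ZMod 2)]) ∧ IsFactor s (w ++ [(1 : ZMod 2)])

/-- `w` is a bispecial factor of `s`. -/
def Bispecial (s : ℕ → ZMod 2) (w : Word) : Prop :=
  LeftSpecial s w ∧ RightSpecial s w

/-- Factor complexity of a sequence. -/
noncomputable def Cplx (s : ℕ → ZMod 2) (n : ℕ) : ℕ :=
  {w : Word | w.length = n ∧ IsFactor s w}.ncard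

/-- `v` is a complementary symmetric Rote sequence: factor complexity `2n` for `n ≥ 1`
and language closed under the exchange of letters. -/
def IsCSRote (v : ℕ → ZMod 2) : Prop :=
  (∀ n, 1 ≤ n → Cplx v n = 2 * n) ∧
  (∀ w : Word, IsFactor v w → IsFactor v (Ex w))

/- ### Auxiliary lemmas -/

lemma zmod2_cases : ∀ c : ZMod 2, c = 0 ∨ c = 1 := by decide

lemma zmod2_two : ∀ a b : ZMod 2, a = b ∨ a = b + 1 := by decide

lemma zmod2_cancel : ∀ a b c : ZMod 2, a + c = b + c → a = b := by decide

lemma zmod2_solve : ∀ a b c d : ZMod 2, a + c = b + d → c = d + 1 → a = b + 1 := by decide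

lemma zmod2_addself : ∀ b c : ZMod 2, b + (b + c) = c := by decide

lemma zmod2_addself' : ∀ a c : ZMod 2, (c + a) + a = c := by decide

lemma zmod2_oneone : (1 : ZMod 2) + 1 = 0 := by decide

lemma zmod2_zeroone : (0 : ZMod 2) + 1 = 1 := by decide

lemma sdiff_length (y : Word) : (Sdiff y).length = y.length - 1 := by
  simp [Sdiff]

lemma sdiff_cons (a b : ZMod 2) (t : Word) :
    Sdiff (a :: b :: t) = (a + b) :: Sdiff (b :: t) := rfl

lemma ex_cons (a : ZMod 2) (t : Word) : Ex (a :: t) = (a + 1) :: Ex t := rfl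

lemma ex_append (x y : Word) : Ex (x ++ y) = Ex x ++ Ex y := by simp [Ex]

lemma ex_ex (x : Word) : Ex (Ex x) = x := by
  have h2 : ∀ a : ZMod 2, a + 1 + 1 = a := by decide
  simp [Ex, List.map_map, Function.comp_def, h2]

lemma sdiff_concat (t : Word) (b a : ZMod 2) :
    Sdiff ((t ++ [b]) ++ [a]) = Sdiff (t ++ [b]) ++ [b + a] := by
  induction t with
  | nil => rfl
  | cons c t' ih =>
    cases t' with
    | nil => rfl
    | cons d t'' =>
      simp only [List.cons_append] at ih ⊢
      rw [sdiff_cons, sdiff_cons, ih]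
      simp

lemma getElem_sdiff (y : Word) (i : ℕ) (h1 : i < (Sdiff y).length) :
    (Sdiff y)[i] = y[i]'(by simp [Sdiff] at h1 ⊢; omega) +
      y[i + 1]'(by simp [Sdiff] at h1 ⊢; omega) := by
  simp [Sdiff, List.getElem_zipWith, List.getElem_tail]

lemma occ_sdiff (u v : ℕ → ZMod 2) (h : ∀ i, u i = v i + v (i + 1)) (y : Word) (m : ℕ)
    (hy : OccAt v y m) : OccAt u (Sdiff y) m := by
  unfold OccAt at hy ⊢
  have hget : ∀ j, ∀ hj : j < y.length, y[j] = v (m + j) := by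
    intro j hj
    rw [List.getElem_of_eq hy]
    simp
  apply List.ext_getElem
  · simp
  · intro i h1 h2
    rw [List.getElem_ofFn, getElem_sdiff, hget, hget, h]
    ring_nf

lemma recon : ∀ x y : Word, x.length = y.length → Sdiff x = Sdiff y → x = y ∨ x = Ex y := by
  intro x
  induction x with
  | nil =>
    intro y hylen _
    cases y with
    | nil => exact Or.inl rfl
    | cons b s => simp at hylen
  | cons a t ih =>
    intro y hylen hs
    cases y with
    | nil => simp at hylen
    | cons b s =>
      cases t with
      | nil =>
        cases s with
        | nil =>
          rcases zmod2_two a b with rfl | rfl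
          · exact Or.inl rfl
          · exact Or.inr rfl
        | cons b2 s2 => simp at hylen
      | cons a2 t2 =>
        cases s with
        | nil => simp at hylen
        | cons b2 s2 =>
          rw [sdiff_cons, sdiff_cons] at hs
          obtain ⟨h1, h2⟩ := List.cons_eq_cons.mp hs
          have hl' : (a2 :: t2).length = (b2 :: s2).length := by simpa using hylen
          rcases ih (b2 :: s2) hl' h2 with heq | heq
          · obtain ⟨e1, e2⟩ := List.cons_eq_cons.mp heq
            subst e1; subst e2
            have : a = b := zmod2_cancel _ _ _ h1
            subst this
            exact Or.inl rfl
          · rw [ex_cons] at heq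
            obtain ⟨e1, e2⟩ := List.cons_eq_cons.mp heq
            have hab : a = b + 1 := zmod2_solve a b a2 b2 h1 e1
            right
            rw [ex_cons, ex_cons, hab, e1, e2]

lemma lift_factor (u v : ℕ → ZMod 2) (hrote : IsCSRote v) (h : ∀ i, u i = v i + v (i + 1))
    (w x : Word) (hw : IsFactor u w) (hl : x.length = w.length + 1) (hs : Sdiff x = w) :
    IsFactor v x ∧ IsFactor v (Ex x) := by
  obtain ⟨m, hm⟩ := hw
  set y : Word := List.ofFn (fun i : Fin (w.length + 1) => v (m + i)) with hy_def
  have hylen : y.length = w.length + 1 := by simp [hy_def]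
  have hy : OccAt v y m := by
    unfold OccAt
    rw [hylen]
  have hyu : OccAt u (Sdiff y) m := occ_sdiff u v h y m hy
  have hsl : (Sdiff y).length = w.length := by rw [sdiff_length, hylen]; omega
  have hsy : Sdiff y = w := by
    unfold OccAt at hyu hm
    rw [hsl] at hyu
    exact hyu.trans hm.symm
  rcases recon x y (by rw [hl, hylen]) (hs.trans hsy.symm) with rfl | rfl
  · exact ⟨⟨m, hy⟩, hrote.2 _ ⟨m, hy⟩⟩
  · exact ⟨hrote.2 _ ⟨m, hy⟩, by rw [ex_ex]; exact ⟨m, hy⟩⟩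

lemma right_lift (u v : ℕ → ZMod 2) (hrote : IsCSRote v) (h : ∀ i, u i = v i + v (i + 1))
    (w t : Word) (b : ZMod 2) (hw : RightSpecial u w)
    (hl : (t ++ [b]).length = w.length + 1) (hs : Sdiff (t ++ [b]) = w) :
    RightSpecial v (t ++ [b]) ∧ RightSpecial v (Ex (t ++ [b])) := by
  have hwa : ∀ c : ZMod 2, IsFactor u (w ++ [c]) := by
    intro c
    rcases zmod2_cases c with rfl | rfl
    · exact hw.1
    · exact hw.2
  have key : ∀ d : ZMod 2,
      IsFactor v ((t ++ [b]) ++ [d]) ∧ IsFactor v (Ex (t ++ [b]) ++ [d + 1]) := by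
    intro d
    have h1 := lift_factor u v hrote h (w ++ [b + d]) ((t ++ [b]) ++ [d]) (hwa _)
      (by simp at hl ⊢; omega) (by rw [sdiff_concat, hs])
    refine ⟨h1.1, ?_⟩
    have he : Ex ((t ++ [b]) ++ [d]) = Ex (t ++ [b]) ++ [d + 1] := by
      rw [ex_append]; rfl
    rw [← he]
    exact h1.2
  constructor
  · exact ⟨(key 0).1, (key 1).1⟩
  · constructor
    · have := (key 1).2; rwa [zmod2_oneone] at this
    · have := (key 0).2; rwa [zmod2_zeroone] at this

lemma left_lift (u v : ℕ → ZMod 2) (hrote : IsCSRote v) (h : ∀ i, u i = v i + v (i + 1))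
    (w t : Word) (a : ZMod 2) (hw : LeftSpecial u w)
    (hl : (a :: t).length = w.length + 1) (hs : Sdiff (a :: t) = w) :
    LeftSpecial v (a :: t) ∧ LeftSpecial v (Ex (a :: t)) := by
  have hwa : ∀ c : ZMod 2, IsFactor u (c :: w) := by
    intro c
    rcases zmod2_cases c with rfl | rfl
    · exact hw.1
    · exact hw.2
  have key : ∀ d : ZMod 2,
      IsFactor v (d :: (a :: t)) ∧ IsFactor v ((d + 1) :: Ex (a :: t)) := by
    intro d
    have h1 := lift_factor u v hrote h ((d + a) :: w) (d :: a :: t) (hwa _)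
      (by simp at hl ⊢; omega) (by rw [sdiff_cons, hs])
    exact ⟨h1.1, h1.2⟩
  constructor
  · exact ⟨(key 0).1, (key 1).1⟩
  · constructor
    · have := (key 1).2; rwa [zmod2_oneone] at this
    · have := (key 0).2; rwa [zmod2_zeroone] at this

lemma factor_sdiff (u v : ℕ → ZMod 2) (h : ∀ i, u i = v i + v (i + 1)) (y : Word)
    (hy : IsFactor v y) : IsFactor u (Sdiff y) := by
  obtain ⟨m, hm⟩ := hy
  exact ⟨m, occ_sdiff u v h y m hm⟩

lemma right_proj (u v : ℕ → ZMod 2) (h : ∀ i, u i = v i + v (i + 1))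
    (t : Word) (b : ZMod 2) (hr : RightSpecial v (t ++ [b])) :
    RightSpecial u (Sdiff (t ++ [b])) := by
  have hra : ∀ d : ZMod 2, IsFactor v ((t ++ [b]) ++ [d]) := by
    intro d
    rcases zmod2_cases d with rfl | rfl
    · exact hr.1
    · exact hr.2
  have key : ∀ d : ZMod 2, IsFactor u (Sdiff (t ++ [b]) ++ [b + d]) := by
    intro d
    have := factor_sdiff u v h _ (hra d)
    rwa [sdiff_concat] at this
  constructor
  · have := key (b + 0); rwa [zmod2_addself] at this
  · have := key (b + 1); rwa [zmod2_addself] at this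

lemma left_proj (u v : ℕ → ZMod 2) (h : ∀ i, u i = v i + v (i + 1))
    (t : Word) (a : ZMod 2) (hr : LeftSpecial v (a :: t)) :
    LeftSpecial u (Sdiff (a :: t)) := by
  have hra : ∀ d : ZMod 2, IsFactor v (d :: (a :: t)) := by
    intro d
    rcases zmod2_cases d with rfl | rfl
    · exact hr.1
    · exact hr.2
  have key : ∀ d : ZMod 2, IsFactor u ((d + a) :: Sdiff (a :: t)) := by
    intro d
    have := factor_sdiff u v h _ (hra d)
    rwa [sdiff_cons] at this
  constructor
  · have := key (0 + a); rwa [zmod2_addself'] at this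
  · have := key (1 + a); rwa [zmod2_addself'] at this

/-- let `v` be a complementary symmetric Rote sequence and `u = S(v)` the
associated Sturmian sequence. If `w` is a bispecial factor of `u` of length `ℓ`, then
both words `x`, `E(x)` of length `ℓ+1` with `S(x) = w` are bispecial factors of `v`;
conversely, if `x` is a (non-empty) bispecial factor of `v`, then `S(x)` is a bispecial
factor of `u`. -/
theorem bispecial_correspondence (u v : ℕ → ZMod 2)
    (hrote : IsCSRote v) (h : ∀ i, u i = v i + v (i + 1)) :
    (∀ (w x : Word), Bispecial u w → x.length = w.length + 1 → Sdiff x = w →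
        Bispecial v x ∧ Bispecial v (Ex x)) ∧
    (∀ x : Word, x ≠ [] → Bispecial v x → Bispecial u (Sdiff x)) := by
  constructor
  · intro w x hbw hlen hsx
    rcases List.eq_nil_or_concat x with rfl | ⟨t, b, rfl⟩
    · simp at hlen
    · simp only [List.concat_eq_append] at hlen hsx ⊢
      have hR := right_lift u v hrote h w t b hbw.2 hlen hsx
      have hL : LeftSpecial v (t ++ [b]) ∧ LeftSpecial v (Ex (t ++ [b])) := by
        cases t with
        | nil =>
          simpa using left_lift u v hrote h w [] b hbw.1 (by simpa using hlen)
            (by simpa using hsx)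
        | cons a t' =>
          simpa using left_lift u v hrote h w (t' ++ [b]) a hbw.1 (by simpa using hlen)
            (by simpa using hsx)
      exact ⟨⟨hL.1, hR.1⟩, ⟨hL.2, hR.2⟩⟩
  · intro x hx hbx
    rcases List.eq_nil_or_concat x with rfl | ⟨t, b, rfl⟩
    · exact absurd rfl hx
    · simp only [List.concat_eq_append] at hbx ⊢
      have hR := right_proj u v h t b hbx.2
      have hL : LeftSpecial u (Sdiff (t ++ [b])) := by
        cases t with
        | nil => simpa using left_proj u v h [] b (by simpa using hbx.1)
        | cons a t' => simpa using left_proj u v h (t' ++ [b]) a (by simpa using hbx.1)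
      exact ⟨hL, hR⟩
end

section
/- No prefix of a Sturmian sequence can have two return words that both contain an even number of 1's. -/
/-- A Sturmian sequence: factor complexity `n + 1` for all `n`. -/
def IsSturmian (s : ℕ → ZMod 2) : Prop := ∀ n, Cplx s n = n + 1

/-- The set of return words to the word `w` in the sequence `s`. -/
def ReturnWords (s : ℕ → ZMod 2) (w : Word) : Set Word :=
  {r | ∃ i j, OccAt s w i ∧ OccAt s w j ∧ i < j ∧
        (∀ t, i < t → t < j → ¬ OccAt s w t) ∧
        r = List.ofFn fun t : Fin (j - i) => s (i + t)}

/-!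
Let `a = u 0` and `b = a + 1`. If `u` is aperiodic and has at most one right special factor of
each length, the gaps between consecutive occurrences of `a` take only two consecutive values
`P + 1` and `P + 2` (a longer run of `b`'s would produce two right special factors `a b^n` and
`b^(n+1)`), so `u` is the image of a derived sequence `d` under `0 ↦ a b^P`, `1 ↦ a b^(P+1)`, and
`d` is again aperiodic with unique right special factors. The occurrences of a nonempty prefix
of `u` are the images of the occurrences of a shorter prefix of `d`, so the return words of the
former are the images of the return words of the latter. The morphism has a Parikh matrix of
determinant `±1`; by induction on the prefix length, starting from the two one-letter return
words of the empty prefix, the Parikh vectors of two distinct return words have determinant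
`±1`. Two words with an even number of `1`'s have an even determinant.
-/

lemma ZMod.two_eq_or_eq_add_one (a c : ZMod 2) : c = a ∨ c = a + 1 := by
  revert a c; decide

lemma ZMod.two_ne_add_one (a : ZMod 2) : a ≠ a + 1 := by
  revert a; decide

lemma ZMod.forall_two {p : ZMod 2 → Prop} : (∀ c, p c) ↔ p 0 ∧ p 1 := by
  refine ⟨fun h => ⟨h 0, h 1⟩, fun h c => ?_⟩
  obtain rfl | rfl : c = 0 ∨ c = 1 := ZMod.two_eq_or_eq_add_one 0 c
  exacts [h.1, h.2]

lemma ZMod.exists_two {p : ZMod 2 → Prop} : (∃ c, p c) ↔ p 0 ∨ p 1 := by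
  refine ⟨fun ⟨c, hc⟩ => ?_, fun h => h.elim (⟨0, ·⟩) (⟨1, ·⟩)⟩
  obtain rfl | rfl : c = 0 ∨ c = 1 := ZMod.two_eq_or_eq_add_one 0 c
  exacts [.inl hc, .inr hc]

def factorAt (z : ℕ → ZMod 2) (L m : ℕ) : Word := List.ofFn fun j : Fin L => z (m + j)

section Factors

variable {z : ℕ → ZMod 2} {v w : Word} {L m : ℕ}

@[simp] lemma length_factorAt : (factorAt z L m).length = L := List.length_ofFn

@[simp] lemma getElem_factorAt {j : ℕ} (hj : j < (factorAt z L m).length) :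
    (factorAt z L m)[j] = z (m + j) := by
  simp [factorAt]

lemma factorAt_zero_eq_ofFn (n : ℕ) : factorAt z n 0 = List.ofFn fun j : Fin n => z j := by
  simp [factorAt]

lemma occAt_iff_eq_factorAt : OccAt z w m ↔ w = factorAt z w.length m := Iff.rfl

lemma occAt_factorAt : OccAt z (factorAt z L m) m := by
  rw [occAt_iff_eq_factorAt, length_factorAt]

lemma isFactor_factorAt : IsFactor z (factorAt z L m) := ⟨m, occAt_factorAt⟩

lemma isFactor_iff_exists_eq_factorAt (hw : w.length = L) :
    IsFactor z w ↔ ∃ m, w = factorAt z L m := by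
  subst hw; rfl

lemma factorAt_eq_factorAt_iff {m' : ℕ} :
    factorAt z L m = factorAt z L m' ↔ ∀ j < L, z (m + j) = z (m' + j) := by
  simp [factorAt, List.ofFn_inj, funext_iff, Fin.forall_iff]

lemma factorAt_add (L₁ L₂ : ℕ) :
    factorAt z (L₁ + L₂) m = factorAt z L₁ m ++ factorAt z L₂ (m + L₁) := by
  simp [factorAt, List.ofFn_add, add_assoc]

lemma factorAt_succ : factorAt z (L + 1) m = factorAt z L m ++ [z (m + L)] := by
  rw [factorAt_add]; simp [factorAt]

lemma occAt_factorAt_zero_iff {N : ℕ} :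
    OccAt z (factorAt z N 0) m ↔ ∀ j < N, z (m + j) = z j := by
  rw [occAt_iff_eq_factorAt, length_factorAt, eq_comm, factorAt_eq_factorAt_iff]
  simp

lemma IsFactor.of_infix (h : IsFactor z v) (hwv : w <:+: v) : IsFactor z w := by
  obtain ⟨s, t, rfl⟩ := hwv
  obtain ⟨m, hm⟩ := h
  refine ⟨m + s.length, ?_⟩
  rw [occAt_iff_eq_factorAt, List.length_append, List.length_append, factorAt_add,
    factorAt_add] at hm
  exact (List.append_inj (List.append_inj hm (by simp)).1 (by simp)).2

lemma isFactor_iff_exists_isFactor_append :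
    IsFactor z w ↔ ∃ c, IsFactor z (w ++ [c]) := by
  refine ⟨fun hw => ?_, fun ⟨c, hc⟩ => hc.of_infix (List.prefix_append _ _).isInfix⟩
  obtain ⟨m, hm⟩ := hw
  have := isFactor_factorAt (z := z) (L := w.length + 1) (m := m)
  rw [factorAt_succ, ← occAt_iff_eq_factorAt.1 hm] at this
  exact ⟨_, this⟩

end Factors

def IsRightSpecial (z : ℕ → ZMod 2) (w : Word) : Prop := ∀ c : ZMod 2, IsFactor z (w ++ [c])

def UniqueRightSpecial (z : ℕ → ZMod 2) : Prop :=
  ∀ v w : Word, IsRightSpecial z v → IsRightSpecial z w → v.length = w.length → v = w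

def EventuallyPeriodic (z : ℕ → ZMod 2) : Prop := ∃ p > 0, ∃ M, ∀ m ≥ M, z (m + p) = z m

section RightSpecial

variable {z : ℕ → ZMod 2} {v w : Word}

lemma isRightSpecial_of_isFactor {a : ZMod 2} (ha : IsFactor z (w ++ [a]))
    (hb : IsFactor z (w ++ [a + 1])) : IsRightSpecial z w := fun c => by
  rcases ZMod.two_eq_or_eq_add_one a c with rfl | rfl <;> assumption

lemma IsRightSpecial.drop (hw : IsRightSpecial z w) (k : ℕ) : IsRightSpecial z (w.drop k) :=
  fun c => (hw c).of_infix
    ⟨w.take k, [], by rw [List.append_nil, ← List.append_assoc, List.take_append_drop]⟩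

lemma UniqueRightSpecial.eq_drop (hz : UniqueRightSpecial z) (hv : IsRightSpecial z v)
    (hw : IsRightSpecial z w) (hle : v.length ≤ w.length) :
    v = w.drop (w.length - v.length) :=
  hz v _ hv (hw.drop _) (by simp; omega)

end RightSpecial

section Complexity

variable {z : ℕ → ZMod 2}

lemma cplx_succ (L : ℕ) :
    Cplx z (L + 1) = Cplx z L + {w : Word | w.length = L ∧ IsRightSpecial z w}.ncard := by
  let S (c : ZMod 2) : Set Word := {w | w.length = L ∧ IsFactor z (w ++ [c])}
  have hfin (c : ZMod 2) : (S c).Finite :=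
    (List.finite_length_eq (ZMod 2) L).subset fun _ hw => hw.1
  have hsucc : {w : Word | w.length = L + 1 ∧ IsFactor z w} =
      (· ++ [0]) '' S 0 ∪ (· ++ [1]) '' S 1 := by
    ext w
    constructor
    · rintro ⟨hl, hw⟩
      obtain rfl | ⟨v, c, rfl⟩ := w.eq_nil_or_concat'
      · simp at hl
      · obtain rfl | rfl : c = 0 ∨ c = 1 := ZMod.two_eq_or_eq_add_one 0 c
        exacts [.inl ⟨v, ⟨by simpa using hl, hw⟩, rfl⟩, .inr ⟨v, ⟨by simpa using hl, hw⟩, rfl⟩]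
    · rintro (⟨v, ⟨hl, hv⟩, rfl⟩ | ⟨v, ⟨hl, hv⟩, rfl⟩) <;> exact ⟨by simp [hl], hv⟩
  have hdisj : Disjoint ((· ++ [(0 : ZMod 2)]) '' S 0) ((· ++ [1]) '' S 1) := by
    rw [Set.disjoint_left]
    rintro _ ⟨v, -, rfl⟩ ⟨v', -, h⟩
    simpa using congrArg List.getLast? h
  have hcup : S 0 ∪ S 1 = {w : Word | w.length = L ∧ IsFactor z w} := by
    ext w
    simp only [S, Set.mem_union, Set.mem_ofPred_eq]
    rw [isFactor_iff_exists_isFactor_append (w := w), ZMod.exists_two]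
    tauto
  have hcap : S 0 ∩ S 1 = {w : Word | w.length = L ∧ IsRightSpecial z w} := by
    ext w
    simp only [S, IsRightSpecial, ZMod.forall_two, Set.mem_inter_iff, Set.mem_ofPred_eq]
    tauto
  have hcount := Set.ncard_union_add_ncard_inter (S 0) (S 1) (hfin 0) (hfin 1)
  rw [hcup, hcap] at hcount
  rw [Cplx, Cplx, hsucc, Set.ncard_union_eq hdisj ((hfin 0).image _) ((hfin 1).image _),
    Set.ncard_image_of_injective _ (List.append_left_injective _),
    Set.ncard_image_of_injective _ (List.append_left_injective _)]
  omega

lemma EventuallyPeriodic.exists_cplx_le (h : EventuallyPeriodic z) : ∃ B, ∀ L, Cplx z L ≤ B := by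
  obtain ⟨p, hp, M, hper⟩ := h
  refine ⟨M + p, fun L => ?_⟩
  have hearly (m : ℕ) : ∃ m' < M + p, factorAt z L m = factorAt z L m' := by
    induction m using Nat.strong_induction_on with
    | _ m ih =>
      by_cases hm : m < M + p
      · exact ⟨m, hm, rfl⟩
      obtain ⟨m', hm', heq⟩ := ih (m - p) (by omega)
      refine ⟨m', hm', Eq.trans ?_ heq⟩
      rw [factorAt_eq_factorAt_iff]
      intro j _
      rw [← hper (m - p + j) (by omega)]
      congr 1; omega
  have hsub : {w : Word | w.length = L ∧ IsFactor z w} ⊆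
      ↑((Finset.range (M + p)).image (factorAt z L)) := by
    rintro w ⟨hl, hw⟩
    obtain ⟨m, rfl⟩ := (isFactor_iff_exists_eq_factorAt hl).1 hw
    obtain ⟨m', hm', heq⟩ := hearly m
    simpa [heq] using ⟨m', hm', rfl⟩
  calc Cplx z L ≤ ((Finset.range (M + p)).image (factorAt z L)).card := by
        rw [Cplx, ← Set.ncard_coe_finset]; exact Set.ncard_le_ncard hsub
    _ ≤ M + p := Finset.card_image_le.trans (Finset.card_range _).le

lemma IsSturmian.not_eventuallyPeriodic (hz : IsSturmian z) : ¬ EventuallyPeriodic z := by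
  intro h
  obtain ⟨B, hB⟩ := h.exists_cplx_le
  have := hB B
  rw [hz B] at this
  omega

lemma IsSturmian.uniqueRightSpecial (hz : IsSturmian z) : UniqueRightSpecial z := by
  intro v w hv hw hvw
  have hcard := cplx_succ (z := z) w.length
  rw [hz, hz] at hcard
  have hfin : {x : Word | x.length = w.length ∧ IsRightSpecial z x}.Finite :=
    (List.finite_length_eq (ZMod 2) _).subset fun _ hx => hx.1
  exact (Set.ncard_le_one_iff hfin).1 (by omega) ⟨hvw, hv⟩ ⟨rfl, hw⟩

end Complexity

def block (a : ZMod 2) (P : ℕ) (c : ZMod 2) : Word := a :: List.replicate (P + c.val) (a + 1)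

def blockMorphism (a : ZMod 2) (P : ℕ) (ρ : Word) : Word := ρ.flatMap (block a P)

section BlockMorphism

variable {a : ZMod 2} {P : ℕ} {ρ σ : Word}

@[simp] lemma length_block (c : ZMod 2) : (block a P c).length = P + 1 + c.val := by
  simp [block]; omega

lemma block_zero_append : block a P 0 ++ [a + 1] = block a P 1 := by
  simp [block, ZMod.val_one, List.replicate_succ']

@[simp] lemma blockMorphism_nil : blockMorphism a P [] = [] := rfl

@[simp] lemma blockMorphism_cons (c : ZMod 2) :
    blockMorphism a P (c :: ρ) = block a P c ++ blockMorphism a P ρ :=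
  List.flatMap_cons

@[simp] lemma blockMorphism_append :
    blockMorphism a P (ρ ++ σ) = blockMorphism a P ρ ++ blockMorphism a P σ :=
  List.flatMap_append

lemma length_eq_count_zero_add_count_one (ρ : Word) : ρ.length = ρ.count 0 + ρ.count 1 := by
  induction ρ with
  | nil => rfl
  | cons c ρ ih =>
    rcases ZMod.two_eq_or_eq_add_one 0 c with rfl | rfl <;> simp [ih] <;> omega

lemma count_blockMorphism_self (ρ : Word) : (blockMorphism a P ρ).count a = ρ.length := by
  induction ρ with
  | nil => rfl
  | cons c ρ ih => simp [block, ih, List.count_replicate]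

lemma count_blockMorphism_add_one (ρ : Word) :
    (blockMorphism a P ρ).count (a + 1) = P * ρ.count 0 + (P + 1) * ρ.count 1 := by
  induction ρ with
  | nil => rfl
  | cons c ρ ih =>
    rcases ZMod.two_eq_or_eq_add_one 0 c with rfl | rfl <;>
      simp [block, ih, ZMod.val_one] <;> ring

lemma head?_blockMorphism_ne : (blockMorphism a P ρ).head? ≠ some (a + 1) := by
  cases ρ with
  | nil => simp
  | cons c ρ => simp [block, ZMod.two_ne_add_one a]

lemma blockMorphism_injective : Function.Injective (blockMorphism a P) := by
  have key (ρ σ : Word) :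
      block a P 0 ++ blockMorphism a P ρ ≠ block a P 1 ++ blockMorphism a P σ := by
    intro h
    rw [← block_zero_append, List.append_assoc, List.append_cancel_left_eq] at h
    exact head?_blockMorphism_ne (by rw [h]; rfl)
  intro ρ σ h
  induction ρ generalizing σ with
  | nil => cases σ <;> simp_all [block]
  | cons c ρ ih =>
    cases σ with
    | nil => simp [block] at h
    | cons c' σ =>
      rw [blockMorphism_cons, blockMorphism_cons] at h
      rcases ZMod.two_eq_or_eq_add_one 0 c with rfl | rfl <;>
        rcases ZMod.two_eq_or_eq_add_one 0 c' with rfl | rfl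
      · rw [ih (List.append_cancel_left h)]
      · exact (key _ _ h).elim
      · exact (key _ _ h.symm).elim
      · rw [ih (List.append_cancel_left h)]

end BlockMorphism

def parikhDet (r s : Word) : ℤ := r.count 0 * s.count 1 - r.count 1 * s.count 0

lemma natAbs_parikhDet_blockMorphism (a : ZMod 2) (P : ℕ) (ρ σ : Word) :
    (parikhDet (blockMorphism a P ρ) (blockMorphism a P σ)).natAbs = (parikhDet ρ σ).natAbs := by
  have hself := count_blockMorphism_self (a := a) (P := P)
  have hnext := count_blockMorphism_add_one (a := a) (P := P)
  obtain rfl | rfl : a = 0 ∨ a = 1 := ZMod.two_eq_or_eq_add_one 0 a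
  · rw [zero_add] at hnext
    simp only [parikhDet, hself, hnext, length_eq_count_zero_add_count_one]
    push_cast; ring_nf
  · rw [show (1 + 1 : ZMod 2) = 0 from rfl] at hnext
    rw [← Int.natAbs_neg]
    simp only [parikhDet, hself, hnext, length_eq_count_zero_add_count_one]
    push_cast; ring_nf

/-- `u` is the concatenation of the blocks `block (u 0) P (d t)`, the `t`-th of which starts at
position `i t`. -/
structure IsBlockCoding (u : ℕ → ZMod 2) (i : ℕ → ℕ) (P : ℕ) (d : ℕ → ZMod 2) : Prop where
  start_zero : i 0 = 0
  start_succ (t : ℕ) : i (t + 1) = i t + (P + 1 + (d t).val)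
  apply_start (t : ℕ) : u (i t) = u 0
  apply_of_start_lt (t m : ℕ) : i t < m → m < i (t + 1) → u m = u 0 + 1

namespace IsBlockCoding

variable {u : ℕ → ZMod 2} {i : ℕ → ℕ} {P : ℕ} {d : ℕ → ZMod 2}

lemma strictMono (hB : IsBlockCoding u i P d) : StrictMono i :=
  strictMono_nat_of_lt_succ fun t => by rw [hB.start_succ t]; omega

lemma exists_start_le_lt (hB : IsBlockCoding u i P d) (m : ℕ) :
    ∃ s, i s ≤ m ∧ m < i (s + 1) := by
  induction m with
  | zero => exact ⟨0, by simp [hB.start_zero], by rw [hB.start_succ, hB.start_zero]; omega⟩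
  | succ m ih =>
    obtain ⟨s, hs, hm⟩ := ih
    by_cases h : m + 1 < i (s + 1)
    · exact ⟨s, by omega, h⟩
    · exact ⟨s + 1, by omega, by have := hB.start_succ (s + 1); omega⟩

lemma apply_eq_apply_zero_iff (hB : IsBlockCoding u i P d) {m : ℕ} :
    u m = u 0 ↔ ∃ t, m = i t := by
  refine ⟨fun hm => ?_, fun ⟨t, ht⟩ => ht ▸ hB.apply_start t⟩
  obtain ⟨s, hs, hm'⟩ := hB.exists_start_le_lt m
  rcases hs.eq_or_lt with h | h
  · exact ⟨s, h.symm⟩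
  · exact absurd (hm.symm.trans (hB.apply_of_start_lt s m h hm')) (ZMod.two_ne_add_one _)

lemma apply_start_add_eq (hB : IsBlockCoding u i P d) {s t r : ℕ}
    (hs : r < P + 1 + (d s).val) (ht : r < P + 1 + (d t).val) : u (i s + r) = u (i t + r) := by
  rcases Nat.eq_zero_or_pos r with rfl | hr
  · simp [hB.apply_start]
  · rw [hB.apply_of_start_lt s (i s + r) (by omega) (by rw [hB.start_succ]; omega),
      hB.apply_of_start_lt t (i t + r) (by omega) (by rw [hB.start_succ]; omega)]

lemma apply_start_add_succ (hB : IsBlockCoding u i P d) (s : ℕ) :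
    u (i s + (P + 1)) = u 0 + d s := by
  obtain h | h : d s = 0 ∨ d s = 1 := ZMod.two_eq_or_eq_add_one 0 (d s)
  · rw [h, add_zero, ← hB.apply_start (s + 1), hB.start_succ, h, ZMod.val_zero, add_zero]
  · rw [h, hB.apply_of_start_lt s _ (by omega) (by rw [hB.start_succ, h, ZMod.val_one]; omega)]

lemma eq_start_succ (hB : IsBlockCoding u i P d) {s x : ℕ} (hs : i s < x) (hx : u x = u 0)
    (hgap : ∀ y, i s < y → y < x → u y ≠ u 0) : x = i (s + 1) := by
  obtain ⟨τ, rfl⟩ := hB.apply_eq_apply_zero_iff.1 hx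
  have hsτ : s < τ := hB.strictMono.lt_iff_lt.1 hs
  rcases (Nat.succ_le_of_lt hsτ).eq_or_lt with h | h
  · rw [← h]
  · exact absurd (hB.apply_start (s + 1))
      (hgap _ (hB.strictMono (Nat.lt_succ_self s)) (hB.strictMono h))

lemma start_add_add_start (hB : IsBlockCoding u i P d) {t t' k : ℕ}
    (h : ∀ s < k, d (t + s) = d (t' + s)) : i (t + k) + i t' = i (t' + k) + i t := by
  induction k with
  | zero => simp [add_comm]
  | succ k ih =>
    rw [← add_assoc, ← add_assoc, hB.start_succ, hB.start_succ, h k (by omega)]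
    have := ih fun s hs => h s (by omega)
    omega

lemma start_add (hB : IsBlockCoding u i P d) (t k : ℕ) :
    i (t + k) = i t + (blockMorphism (u 0) P (factorAt d k t)).length := by
  induction k with
  | zero => simp [factorAt]
  | succ k ih =>
    rw [← add_assoc, hB.start_succ, ih, factorAt_succ, blockMorphism_append]
    simp [add_assoc]

lemma factorAt_start_block (hB : IsBlockCoding u i P d) (s : ℕ) :
    factorAt u (P + 1 + (d s).val) (i s) = block (u 0) P (d s) := by
  refine List.ext_getElem (by simp) fun j hj _ => ?_
  rw [getElem_factorAt]
  rcases Nat.eq_zero_or_pos j with rfl | hj0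
  · simp [block, hB.apply_start]
  · simp only [length_factorAt] at hj
    rw [hB.apply_of_start_lt s _ (by omega) (by rw [hB.start_succ]; omega)]
    simp [block, List.getElem_cons, hj0.ne']

lemma factorAt_start (hB : IsBlockCoding u i P d) (t k : ℕ) :
    factorAt u (blockMorphism (u 0) P (factorAt d k t)).length (i t) =
      blockMorphism (u 0) P (factorAt d k t) := by
  induction k with
  | zero => simp [factorAt]
  | succ k ih =>
    simp only [factorAt_succ, blockMorphism_append, blockMorphism_cons, blockMorphism_nil,
      List.append_nil, List.length_append, length_block]
    rw [factorAt_add, ih, ← hB.start_add, hB.factorAt_start_block]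


lemma start_add_eq_of_window (hB : IsBlockCoding u i P d) {t N : ℕ}
    (h : ∀ j < N, u (i t + j) = u j) : ∀ s, i s < N → i (t + s) = i t + i s := by
  intro s
  induction s with
  | zero => simp [hB.start_zero]
  | succ s ih =>
    intro hs
    have hlt : i s < i (s + 1) := hB.strictMono (Nat.lt_succ_self s)
    have ih := ih (by omega)
    rw [← add_assoc]
    refine (hB.eq_start_succ (by omega) (by rw [h _ hs, hB.apply_start]) fun y hy hy' => ?_).symm
    obtain ⟨j, rfl⟩ : ∃ j, y = i t + j := ⟨y - i t, by omega⟩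
    rw [h j (by omega), hB.apply_of_start_lt s j (by omega) (by omega)]
    exact (ZMod.two_ne_add_one _).symm

/-- The type `d s` of block `s` is read off at position `i s + (P + 1)`
(`apply_start_add_succ`), so it is visible in the prefix of length `N` iff `i s + (P + 1) < N`. -/
lemma window_eq_prefix_iff (hB : IsBlockCoding u i P d) {N m : ℕ} (hN : 0 < N) :
    (∀ j < N, u (m + j) = u j) ↔ ∃ t, m = i t ∧ ∀ s, i s + (P + 1) < N → d (t + s) = d s := by
  constructor
  · intro h
    obtain ⟨t, rfl⟩ := hB.apply_eq_apply_zero_iff.1 (by simpa using h 0 hN)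
    refine ⟨t, rfl, fun s hs => ?_⟩
    have hletter := h (i s + (P + 1)) hs
    rw [← add_assoc, ← hB.start_add_eq_of_window h s (by omega), hB.apply_start_add_succ,
      hB.apply_start_add_succ] at hletter
    exact add_left_cancel hletter
  · rintro ⟨t, rfl, hd⟩ j hj
    obtain ⟨s, hs, hs'⟩ := hB.exists_start_le_lt j
    have hstart : i (t + s) = i t + i s := by
      have := hB.start_add_add_start (t := t) (t' := 0) (k := s) fun s' hs' => by
        have := hB.start_succ s'
        have := hB.strictMono.monotone (show s' + 1 ≤ s by omega)
        rw [zero_add]; exact hd s' (by omega)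
      simp only [hB.start_zero, zero_add] at this; omega
    have hlen : j - i s < P + 1 + (d (t + s)).val := by
      by_cases hvis : i s + (P + 1) < N
      · rw [hd s hvis]; have := hB.start_succ s; omega
      · omega
    have := hB.apply_start_add_eq hlen (t := s) (by have := hB.start_succ s; omega)
    rwa [hstart, add_assoc, Nat.add_sub_cancel' hs] at this

lemma exists_occAt_prefix_iff (hB : IsBlockCoding u i P d) {N : ℕ} (hN : 0 < N) :
    ∃ k < N, ∀ m, OccAt u (factorAt u N 0) m ↔ ∃ t, m = i t ∧ OccAt d (factorAt d k 0) t := by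
  classical
  have hex : ∃ k, N ≤ i k + (P + 1) := ⟨N, by have := hB.strictMono.id_le N; simp at this; omega⟩
  have hvis (s : ℕ) : i s + (P + 1) < N ↔ s < Nat.find hex := by
    rw [Nat.lt_find_iff]
    refine ⟨fun h s' hs' => ?_, fun h => by simpa using h s le_rfl⟩
    have := hB.strictMono.monotone hs'
    omega
  refine ⟨Nat.find hex, Nat.find_lt_iff _ _ |>.2 ⟨N - 1, by omega, ?_⟩, fun m => ?_⟩
  · have := hB.strictMono.id_le (N - 1); simp at this; omega
  · simp only [occAt_factorAt_zero_iff, hB.window_eq_prefix_iff hN, hvis]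

lemma returnWords_subset_image (hB : IsBlockCoding u i P d) {w v : Word}
    (hocc : ∀ m, OccAt u w m ↔ ∃ t, m = i t ∧ OccAt d v t) :
    ReturnWords u w ⊆ blockMorphism (u 0) P '' ReturnWords d v := by
  rintro r ⟨m₁, m₂, h₁, h₂, hlt, hnot, rfl⟩
  obtain ⟨t₁, rfl, ht₁⟩ := (hocc m₁).1 h₁
  obtain ⟨t₂, rfl, ht₂⟩ := (hocc m₂).1 h₂
  have ht : t₁ < t₂ := hB.strictMono.lt_iff_lt.1 hlt
  refine ⟨factorAt d (t₂ - t₁) t₁, ⟨t₁, t₂, ht₁, ht₂, ht, fun τ hτ hτ' hocc' =>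
    hnot (i τ) (hB.strictMono hτ) (hB.strictMono hτ') ((hocc _).2 ⟨τ, rfl, hocc'⟩), rfl⟩, ?_⟩
  have hlen := hB.start_add t₁ (t₂ - t₁)
  rw [Nat.add_sub_cancel' ht.le] at hlen
  change _ = factorAt u (i t₂ - i t₁) (i t₁)
  rw [hlen, Nat.add_sub_cancel_left, hB.factorAt_start]


lemma eventuallyPeriodic (hB : IsBlockCoding u i P d) (hd : EventuallyPeriodic d) :
    EventuallyPeriodic u := by
  obtain ⟨p, hp, M, hper⟩ := hd
  have hshift : ∀ s ≥ M, i (s + p) = i s + (i (M + p) - i M) := by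
    intro s hs
    induction s, hs using Nat.le_induction with
    | base => have := hB.strictMono.monotone (Nat.le_add_right M p); omega
    | succ s hs ih => rw [add_right_comm, hB.start_succ, hB.start_succ, hper s hs, ih]; omega
  refine ⟨i (M + p) - i M, Nat.sub_pos_of_lt (hB.strictMono (by omega)), i M, fun m hm => ?_⟩
  obtain ⟨s, hs, hs'⟩ := hB.exists_start_le_lt m
  have hMs : M ≤ s := by
    by_contra h
    have := hB.strictMono.monotone (show s + 1 ≤ M by omega)
    omega
  have hr : m - i s < P + 1 + (d s).val := by have := hB.start_succ s; omega
  have := hB.apply_start_add_eq (t := s + p) hr (by rwa [hper s hMs])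
  rw [hshift s hMs] at this
  convert this.symm using 2 <;> omega

lemma isFactor_blockMorphism_append (hB : IsBlockCoding u i P d) {ρ : Word}
    (hρ : IsFactor d ρ) : IsFactor u (blockMorphism (u 0) P ρ ++ [u 0]) := by
  obtain ⟨t, ht⟩ := hρ
  rw [occAt_iff_eq_factorAt] at ht
  have h := isFactor_factorAt (z := u)
    (L := (blockMorphism (u 0) P (factorAt d ρ.length t)).length + 1) (m := i t)
  rwa [factorAt_succ, hB.factorAt_start, ← hB.start_add, hB.apply_start, ← ht] at h

lemma isRightSpecial_blockMorphism (hB : IsBlockCoding u i P d) {v : Word}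
    (hv : IsRightSpecial d v) : IsRightSpecial u (blockMorphism (u 0) P (v ++ [0])) := by
  refine isRightSpecial_of_isFactor (hB.isFactor_blockMorphism_append (hv 0))
    ((hB.isFactor_blockMorphism_append (hv 1)).of_infix ?_)
  simp only [blockMorphism_append, blockMorphism_cons, blockMorphism_nil, List.append_nil,
    List.append_assoc, block_zero_append]
  exact ⟨[], [u 0], by simp⟩

lemma uniqueRightSpecial (hB : IsBlockCoding u i P d) (hu : UniqueRightSpecial u) :
    UniqueRightSpecial d := by
  suffices key : ∀ v w, IsRightSpecial d v → IsRightSpecial d w → v.length = w.length →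
      (blockMorphism (u 0) P (v ++ [0])).length ≤ (blockMorphism (u 0) P (w ++ [0])).length →
      v = w by
    intro v w hv hw hvw
    rcases le_total (blockMorphism (u 0) P (v ++ [0])).length
      (blockMorphism (u 0) P (w ++ [0])).length with h | h
    exacts [key v w hv hw hvw h, (key w v hw hv hvw.symm h).symm]
  intro v w hv hw hvw hle
  have hdrop := hu.eq_drop (hB.isRightSpecial_blockMorphism hv)
    (hB.isRightSpecial_blockMorphism hw) hle
  set W := blockMorphism (u 0) P (w ++ [0])
  -- both words contain `|v| + 1` copies of `u 0`, and `W` starts with one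
  have hcount : (W.drop (W.length - (blockMorphism (u 0) P (v ++ [0])).length)).count (u 0) =
      W.count (u 0) := by
    rw [← hdrop, count_blockMorphism_self, count_blockMorphism_self]; simp [hvw]
  have hzero : W.length - (blockMorphism (u 0) P (v ++ [0])).length = 0 := by
    obtain ⟨c, ρ, hc⟩ := List.exists_cons_of_ne_nil (List.concat_ne_nil 0 w)
    obtain ⟨X, hX⟩ : ∃ X, W = u 0 :: X :=
      ⟨_, by simp only [W, hc, blockMorphism_cons, block, List.cons_append]; rfl⟩
    by_contra hpos
    obtain ⟨n, hn⟩ := Nat.exists_eq_add_of_lt (Nat.pos_of_ne_zero hpos)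
    rw [hn, hX, zero_add, List.drop_succ_cons, List.count_cons_self] at hcount
    have := ((List.drop_sublist n X).count_le (u 0))
    omega
  rw [hzero, List.drop_zero] at hdrop
  simpa using blockMorphism_injective hdrop

end IsBlockCoding

section Existence

variable {u : ℕ → ZMod 2}

lemma infinite_setOf_apply_eq (hu : ¬ EventuallyPeriodic u) (a : ZMod 2) :
    {m | u m = a}.Infinite := by
  intro hfin
  obtain ⟨M, hM⟩ := hfin.bddAbove
  have hother (m : ℕ) (hm : M < m) : u m = a + 1 :=
    (ZMod.two_eq_or_eq_add_one a (u m)).resolve_left fun h => (hM h).not_gt hm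
  exact hu ⟨1, one_pos, M + 1, fun m hm => by rw [hother m (by omega), hother (m + 1) (by omega)]⟩

lemma UniqueRightSpecial.le_succ_of_isFactor (hu : UniqueRightSpecial u) {a : ZMod 2} {n n' : ℕ}
    (h : IsFactor u (a :: List.replicate n (a + 1) ++ [a]))
    (h' : IsFactor u (a :: List.replicate n' (a + 1) ++ [a])) : n' ≤ n + 1 := by
  by_contra! hlt
  have hx : IsRightSpecial u (a :: List.replicate n (a + 1)) := by
    refine isRightSpecial_of_isFactor (by simpa using h) ?_
    rw [show n' = n + 1 + (n' - (n + 1)) by omega] at h'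
    exact h'.of_infix ⟨[], List.replicate (n' - (n + 1)) (a + 1) ++ [a], by
      simp [List.replicate_add, List.replicate_succ']⟩
  have hy : IsRightSpecial u (List.replicate (n + 1) (a + 1)) := by
    refine isRightSpecial_of_isFactor (a := a) ?_ ?_
    · rw [show n' = n' - (n + 1) + (n + 1) by omega] at h'
      exact h'.of_infix ⟨a :: List.replicate (n' - (n + 1)) (a + 1), [], by
        simp [List.replicate_add]⟩
    · rw [show n' = n + 2 + (n' - (n + 2)) by omega] at h'
      exact h'.of_infix ⟨[a], List.replicate (n' - (n + 2)) (a + 1) ++ [a], by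
        simp [List.replicate_add, List.replicate_succ']⟩
  have := hu _ _ hx hy (by simp)
  simp only [List.replicate_succ, List.cons.injEq] at this
  exact ZMod.two_ne_add_one a this.1

lemma factorAt_eq_run {a : ZMod 2} {p n : ℕ} (hp : u p = a)
    (hmid : ∀ r, 0 < r → r ≤ n → u (p + r) = a + 1) (hend : u (p + (n + 1)) = a) :
    factorAt u (n + 2) p = a :: List.replicate n (a + 1) ++ [a] := by
  refine List.ext_getElem (by simp) fun j hj _ => ?_
  simp only [length_factorAt] at hj
  rw [getElem_factorAt]
  rcases Nat.eq_zero_or_pos j with rfl | hj0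
  · simpa using hp
  · rcases (show j ≤ n ∨ j = n + 1 by omega) with hjn | rfl
    · simp [List.getElem_cons, hj0.ne', hmid j hj0 hjn, show j - 1 < n by omega]
    · simp [List.getElem_cons, hend]

theorem exists_isBlockCoding (hu : ¬ EventuallyPeriodic u) (hrs : UniqueRightSpecial u) :
    ∃ i P d, IsBlockCoding u i P d := by
  have hinf := infinite_setOf_apply_eq hu (u 0)
  set i := Nat.nth fun m => u m = u 0
  have hmono : StrictMono i := Nat.nth_strictMono hinf
  have hstart (t : ℕ) : u (i t) = u 0 := Nat.nth_mem_of_infinite hinf t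
  have hmid (t m : ℕ) (hm : i t < m) (hm' : m < i (t + 1)) : u m = u 0 + 1 :=
    (ZMod.two_eq_or_eq_add_one (u 0) (u m)).resolve_left fun h =>
      (Nat.le_nth_of_lt_nth_succ hm' h).not_gt hm
  set gap : ℕ → ℕ := fun t => i (t + 1) - i t
  have hgap (t : ℕ) : i t + gap t = i (t + 1) := Nat.add_sub_cancel' (hmono (Nat.lt_succ_self t)).le
  have hgap_pos (t : ℕ) : 0 < gap t := Nat.sub_pos_of_lt (hmono (Nat.lt_succ_self t))
  have hrun (t : ℕ) : IsFactor u (u 0 :: List.replicate (gap t - 1) (u 0 + 1) ++ [u 0]) := by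
    have := hgap t
    have := hgap_pos t
    rw [← factorAt_eq_run (hstart t) (fun r hr hr' => hmid t _ (by omega) (by omega))
      (by rw [show i t + (gap t - 1 + 1) = i (t + 1) by omega, hstart])]
    exact isFactor_factorAt
  have hgap_le (t t' : ℕ) : gap t' ≤ gap t + 1 := by
    have := hrs.le_succ_of_isFactor (hrun t) (hrun t')
    have := hgap_pos t
    omega
  obtain ⟨t₀, ht₀⟩ : sInf (Set.range gap) ∈ Set.range gap := Nat.sInf_mem (Set.range_nonempty gap)
  have hmin (t : ℕ) : gap t₀ ≤ gap t := ht₀ ▸ Nat.sInf_le ⟨t, rfl⟩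
  refine ⟨i, gap t₀ - 1, fun t => if gap t = gap t₀ then 0 else 1,
    ⟨Nat.nth_zero_of_zero rfl, fun t => ?_, hstart, hmid⟩⟩
  have := hgap_le t₀ t
  have := hmin t
  have := hgap_pos t₀
  have := hgap t
  split_ifs with h
  · simp only [ZMod.val_zero]; omega
  · simp only [ZMod.val_one]; omega

end Existence

lemma returnWords_nil (z : ℕ → ZMod 2) {r : Word} (hr : r ∈ ReturnWords z []) :
    ∃ m, r = [z m] := by
  obtain ⟨m, m', -, -, hlt, hnot, rfl⟩ := hr
  obtain rfl : m' = m + 1 := by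
    by_contra h
    exact hnot (m + 1) (by omega) (by omega) (by simp [OccAt])
  exact ⟨m, by simp⟩

theorem natAbs_parikhDet_of_mem_returnWords (N : ℕ) :
    ∀ u : ℕ → ZMod 2, ¬ EventuallyPeriodic u → UniqueRightSpecial u → ∀ {r s : Word},
      r ∈ ReturnWords u (factorAt u N 0) → s ∈ ReturnWords u (factorAt u N 0) → r ≠ s →
      (parikhDet r s).natAbs = 1 := by
  induction N using Nat.strong_induction_on with
  | _ N ih =>
    intro u hu hrs r s hr hs hne
    rcases Nat.eq_zero_or_pos N with rfl | hN
    · obtain ⟨m, rfl⟩ := returnWords_nil u hr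
      obtain ⟨m', rfl⟩ := returnWords_nil u hs
      have key : ∀ x y : ZMod 2, [x] ≠ [y] → (parikhDet [x] [y]).natAbs = 1 := by decide
      exact key _ _ hne
    · obtain ⟨i, P, d, hB⟩ := exists_isBlockCoding hu hrs
      obtain ⟨k, hk, hocc⟩ := hB.exists_occAt_prefix_iff hN
      obtain ⟨ρ, hρ, rfl⟩ := hB.returnWords_subset_image hocc hr
      obtain ⟨σ, hσ, rfl⟩ := hB.returnWords_subset_image hocc hs
      rw [natAbs_parikhDet_blockMorphism]
      exact ih k hk d (mt hB.eventuallyPeriodic hu) (hB.uniqueRightSpecial hrs) hρ hσ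
        (fun h => hne (h ▸ rfl))

/-- no prefix of a Sturmian sequence has two distinct return words that
both contain an even number of `1`'s. -/
theorem sturmian_no_two_stable_return_words (u : ℕ → ZMod 2) (hu : IsSturmian u) :
    ∀ n : ℕ, ¬ ∃ r s : Word,
      r ∈ ReturnWords u (List.ofFn fun i : Fin n => u i) ∧
      s ∈ ReturnWords u (List.ofFn fun i : Fin n => u i) ∧
      r ≠ s ∧ Even (r.count 1) ∧ Even (s.count 1) := by
  rintro n ⟨r, s, hr, hs, hne, ⟨a, ha⟩, ⟨b, hb⟩⟩
  rw [← factorAt_zero_eq_ofFn] at hr hs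
  have hdet := natAbs_parikhDet_of_mem_returnWords n u hu.not_eventuallyPeriodic
    hu.uniqueRightSpecial hr hs hne
  have heven : (2 : ℤ) ∣ parikhDet r s :=
    ⟨r.count 0 * b - a * s.count 0, by rw [parikhDet, ha, hb]; push_cast; ring⟩
  have := Int.natAbs_dvd_natAbs.2 heven
  rw [hdet] at this
  norm_num at this
end

section
/- Let u' and u be Sturmian sequences with u = φ_b(u'), where φ_b: 0→0, 1→01. Then r', s' are the return words to a bispecial prefix w' of u' if and only if φ_b(r'), φ_b(s') are the return words to the bispecial prefix φ_b(w')0 of u; moreover the derivated sequence of u to φ_b(w')0 equals the derivated sequence of u' to w'. -/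
/-- The sequence `t` is the image of `s` under the substitution `φ`. -/
def SubstImage (φ : ZMod 2 → Word) (s t : ℕ → ZMod 2) : Prop :=
  ∀ n, ∃ k, (List.ofFn fun i : Fin n => t i) <+:
              ((List.ofFn fun i : Fin k => s i).flatMap φ)

/-- The morphism `φ_b : 0 → 0, 1 → 01`. -/
def phib (a : ZMod 2) : Word := if a = 0 then [0] else [0, 1]

/-- The derivated sequence of `s` to the prefix `w`: its `n`-th term is the word of
`s` read between the `n`-th and `(n+1)`-st occurrences of `w` in `s`. -/
noncomputable def derivated (s : ℕ → ZMod 2) (w : Word) (n : ℕ) : Word :=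
  List.ofFn fun t : Fin (Nat.nth (OccAt s w) (n + 1) - Nat.nth (OccAt s w) n) =>
    s (Nat.nth (OccAt s w) n + t)


section Aux
-- pointwise characterization of OccAt
lemma occAt_iff (s : ℕ → ZMod 2) (w : Word) (m : ℕ) :
    OccAt s w m ↔ ∀ t (h : t < w.length), w[t] = s (m + t) := by
  unfold OccAt
  constructor
  · intro h t ht
    rw [List.getElem_of_eq h ht]
    simp
  · intro h
    apply List.ext_getElem (by simp)
    intro t h1 h2
    simp [h t h1]

lemma occAt_ofFn (s : ℕ → ZMod 2) (m L : ℕ) :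
    OccAt s (List.ofFn fun t : Fin L => s (m + t)) m := by
  rw [occAt_iff]; simp

lemma occAt_append (s : ℕ → ZMod 2) (x y : Word) (m : ℕ) :
    OccAt s (x ++ y) m ↔ OccAt s x m ∧ OccAt s y (m + x.length) := by
  simp only [occAt_iff, List.length_append]
  constructor
  · intro h
    constructor
    · intro t ht
      have := h t (by omega)
      rwa [List.getElem_append_left ht] at this
    · intro t ht
      have := h (x.length + t) (by omega)
      rw [List.getElem_append_right (by omega)] at this
      simpa [Nat.add_assoc] using this
  · rintro ⟨h1, h2⟩ t ht
    rcases lt_or_ge t x.length with h | h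
    · rw [List.getElem_append_left h]; exact h1 t h
    · rw [List.getElem_append_right h]
      have := h2 (t - x.length) (by omega)
      rw [this]
      congr 1
      omega

lemma occAt_cons (s : ℕ → ZMod 2) (a : ZMod 2) (w : Word) (m : ℕ) :
    OccAt s (a :: w) m ↔ s m = a ∧ OccAt s w (m + 1) := by
  simp only [occAt_iff, List.length_cons]
  constructor
  · intro h
    constructor
    · have := h 0 (by omega); simpa using this.symm
    · intro t ht
      have := h (t + 1) (by omega)
      simpa [Nat.add_comm, Nat.add_assoc, Nat.add_left_comm] using this
  · rintro ⟨h1, h2⟩ t ht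
    cases t with
    | zero => simpa using h1.symm
    | succ t =>
      have := h2 t (by omega)
      simpa [Nat.add_comm, Nat.add_assoc, Nat.add_left_comm] using this

lemma occAt_singleton (s : ℕ → ZMod 2) (a : ZMod 2) (m : ℕ) :
    OccAt s [a] m ↔ s m = a := by
  rw [occAt_cons]
  simp [occAt_iff]


/-- position of the start of the `i`-th block of `u = φ_b(u')`. -/
def fB (u' : ℕ → ZMod 2) (i : ℕ) : ℕ := ∑ j ∈ Finset.range i, (phib (u' j)).length

lemma phib_len_pos (a : ZMod 2) : 0 < (phib a).length := by
  unfold phib; split <;> simp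

lemma fB_zero (u' : ℕ → ZMod 2) : fB u' 0 = 0 := by simp [fB]

lemma fB_succ (u' : ℕ → ZMod 2) (i : ℕ) :
    fB u' (i + 1) = fB u' i + (phib (u' i)).length := by
  simp [fB, Finset.sum_range_succ]

lemma fB_strictMono (u' : ℕ → ZMod 2) : StrictMono (fB u') := by
  apply strictMono_nat_of_lt_succ
  intro n
  rw [fB_succ]
  have := phib_len_pos (u' n)
  omega

lemma ofFn_shift (g : ℕ → ZMod 2) (a n : ℕ) :
    (List.ofFn fun t : Fin (a + n) => g t) =
      (List.ofFn fun t : Fin a => g t) ++ (List.ofFn fun t : Fin n => g (a + t)) := by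
  rw [List.ofFn_add]
  simp

lemma flatMap_ofFn_length (u' : ℕ → ZMod 2) (k : ℕ) :
    ((List.ofFn fun i : Fin k => u' i).flatMap phib).length = fB u' k := by
  induction k with
  | zero => simp [fB_zero]
  | succ k ih =>
    rw [List.ofFn_succ', fB_succ, ← ih]
    simp

lemma flatMap_ofFn_succ (u' : ℕ → ZMod 2) (k : ℕ) :
    ((List.ofFn fun i : Fin (k + 1) => u' i).flatMap phib) =
      ((List.ofFn fun i : Fin k => u' i).flatMap phib) ++ phib (u' k) := by
  rw [List.ofFn_succ']
  simp

/-- the image prefix lemma: the first `fB u' k` letters of `u` are `φ_b` of the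
first `k` letters of `u'`. -/
lemma prefix_image {u' u : ℕ → ZMod 2} (himg : SubstImage phib u' u) (k : ℕ) :
    (List.ofFn fun i : Fin (fB u' k) => u i) =
      (List.ofFn fun i : Fin k => u' i).flatMap phib := by
  obtain ⟨k', hpre⟩ := himg (fB u' k)
  have hlen : fB u' k ≤ fB u' k' := by
    have := hpre.length_le
    simpa only [List.length_ofFn, flatMap_ofFn_length] using this
  have hkk' : k ≤ k' := (fB_strictMono u').le_iff_le.mp hlen
  have hpre2 : ((List.ofFn fun i : Fin k => u' i).flatMap phib) <+:
      ((List.ofFn fun i : Fin k' => u' i).flatMap phib) := by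
    obtain ⟨d, rfl⟩ := Nat.exists_eq_add_of_le hkk'
    rw [ofFn_shift, List.flatMap_append]
    exact List.prefix_append _ _
  have h1 : (List.ofFn fun i : Fin (fB u' k) => u i) <+:
      ((List.ofFn fun i : Fin k => u' i).flatMap phib) := by
    apply List.prefix_of_prefix_length_le hpre hpre2
    simp only [List.length_ofFn, flatMap_ofFn_length]
    exact le_refl _
  exact h1.eq_of_length (by simp only [List.length_ofFn, flatMap_ofFn_length])

/-- block content: the `i`-th block of `u` is `φ_b (u' i)`. -/
lemma block_eq {u' u : ℕ → ZMod 2} (himg : SubstImage phib u' u) (i : ℕ) :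
    (List.ofFn fun t : Fin (phib (u' i)).length => u (fB u' i + t)) = phib (u' i) := by
  have h1 := prefix_image himg (i + 1)
  rw [fB_succ] at h1
  rw [ofFn_shift, flatMap_ofFn_succ, prefix_image himg i] at h1
  exact List.append_cancel_left h1

lemma zmod2_cases_s10 (x : ZMod 2) : x = 0 ∨ x = 1 := by revert x; decide

/-- the structure of blocks. -/
lemma block_cases {u' u : ℕ → ZMod 2} (himg : SubstImage phib u' u) (i : ℕ) :
    (u' i = 0 ∧ fB u' (i + 1) = fB u' i + 1 ∧ u (fB u' i) = 0) ∨
    (u' i = 1 ∧ fB u' (i + 1) = fB u' i + 2 ∧ u (fB u' i) = 0 ∧ u (fB u' i + 1) = 1) := by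
  have hb := block_eq himg i
  rcases zmod2_cases_s10 (u' i) with h | h
  · left
    refine ⟨h, ?_, ?_⟩
    · rw [fB_succ, h]; rfl
    · rw [h] at hb
      simp only [phib, if_pos rfl] at hb
      simpa [List.ofFn_succ] using hb
  · right
    refine ⟨h, ?_, ?_⟩
    · rw [fB_succ, h]; rfl
    · rw [h] at hb
      simp only [phib, one_ne_zero, if_neg] at hb
      simp [List.ofFn_succ] at hb
      exact ⟨hb.1, hb.2⟩

lemma u_fB_eq_zero {u' u : ℕ → ZMod 2} (himg : SubstImage phib u' u) (i : ℕ) :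
    u (fB u' i) = 0 := by
  rcases block_cases himg i with ⟨_, _, h⟩ | ⟨_, _, h, _⟩ <;> exact h

lemma exists_block (u' : ℕ → ZMod 2) (m : ℕ) :
    ∃ i, fB u' i ≤ m ∧ m < fB u' (i + 1) := by
  induction m with
  | zero =>
    exact ⟨0, le_of_eq (fB_zero u'), (fB_zero u') ▸ fB_strictMono u' (Nat.zero_lt_one)⟩
  | succ m ih =>
    obtain ⟨i, h1, h2⟩ := ih
    rcases lt_or_ge (m + 1) (fB u' (i + 1)) with h | h
    · exact ⟨i, by omega, h⟩
    · refine ⟨i + 1, by omega, ?_⟩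
      have := fB_strictMono u' (show i + 1 < i + 1 + 1 by omega)
      omega

lemma zero_iff_fB {u' u : ℕ → ZMod 2} (himg : SubstImage phib u' u) (m : ℕ) :
    u m = 0 ↔ ∃ i, m = fB u' i := by
  constructor
  · intro hm
    obtain ⟨i, h1, h2⟩ := exists_block u' m
    rcases block_cases himg i with ⟨_, hl, _⟩ | ⟨_, hl, _, h1'⟩
    · exact ⟨i, by omega⟩
    · rcases Nat.eq_or_lt_of_le h1 with h | h
      · exact ⟨i, h.symm⟩
      · exfalso
        have : m = fB u' i + 1 := by omega
        rw [this, h1'] at hm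
        exact one_ne_zero hm
  · rintro ⟨i, rfl⟩
    exact u_fB_eq_zero himg i

/-- segment lemma: the letters of `u` between block starts `fB a` and `fB (a+n)` form
`φ_b` of the corresponding segment of `u'`. -/
lemma segment_eq {u' u : ℕ → ZMod 2} (himg : SubstImage phib u' u) (a n : ℕ) :
    (List.ofFn fun t : Fin (fB u' (a + n) - fB u' a) => u (fB u' a + t)) =
      (List.ofFn fun t : Fin n => u' (a + t)).flatMap phib := by
  have hle : fB u' a ≤ fB u' (a + n) := (fB_strictMono u').monotone (by omega)
  have h1 := prefix_image himg (a + n)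
  have h2 : fB u' (a + n) = fB u' a + (fB u' (a + n) - fB u' a) := by omega
  rw [h2, ofFn_shift, prefix_image himg a] at h1
  rw [ofFn_shift (fun t => u' t) a n, List.flatMap_append] at h1
  exact List.append_cancel_left h1

/-- forward direction: an occurrence of `w` at `i` in `u'` gives an occurrence of
`φ_b(w) ++ [0]` at `fB u' i` in `u`. -/
lemma occ_forward {u' u : ℕ → ZMod 2} (himg : SubstImage phib u' u) {w : Word} {i : ℕ}
    (h : OccAt u' w i) : OccAt u (w.flatMap phib ++ [0]) (fB u' i) := by
  rw [occAt_append]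
  constructor
  · -- the flatMap part
    rw [occAt_iff]
    intro t ht
    have hseg := segment_eq himg i w.length
    have hw : (List.ofFn fun t : Fin w.length => u' (i + t)) = w := by
      conv_rhs => rw [h]
    rw [hw] at hseg
    have hlen : (w.flatMap phib).length = fB u' (i + w.length) - fB u' i := by
      rw [← hseg]; simp
    have := List.getElem_of_eq hseg.symm ht
    rw [this]
    simp
  · -- the trailing 0
    rw [occAt_singleton]
    have hlen : (w.flatMap phib).length = fB u' (i + w.length) - fB u' i := by
      have hseg := segment_eq himg i w.length
      have hw : (List.ofFn fun t : Fin w.length => u' (i + t)) = w := by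
        conv_rhs => rw [h]
      rw [hw] at hseg
      rw [← hseg]; simp
    have hle : fB u' i ≤ fB u' (i + w.length) := (fB_strictMono u').monotone (by omega)
    rw [hlen, show fB u' i + (fB u' (i + w.length) - fB u' i) = fB u' (i + w.length) by omega]
    exact u_fB_eq_zero himg (i + w.length)


lemma phib_zero : phib 0 = [0] := by decide
lemma phib_one : phib 1 = [(0 : ZMod 2), 1] := by decide

lemma head_zero (w : Word) : ∃ L, w.flatMap phib ++ [0] = (0 : ZMod 2) :: L := by
  cases w with
  | nil => exact ⟨[], rfl⟩
  | cons a t =>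
    rcases zmod2_cases_s10 a with h | h <;> subst h
    · exact ⟨t.flatMap phib ++ [0], by simp [phib_zero]⟩
    · exact ⟨[1] ++ t.flatMap phib ++ [0], by simp [phib_one]⟩

/-- decoding: an occurrence of `φ_b(w) ++ [0]` at a block start decodes to an
occurrence of `w` in `u'`. -/
lemma occ_decode {u' u : ℕ → ZMod 2} (himg : SubstImage phib u' u) :
    ∀ (w : Word) (i : ℕ), OccAt u (w.flatMap phib ++ [0]) (fB u' i) → OccAt u' w i := by
  intro w
  induction w with
  | nil =>
    intro i _
    simp [OccAt]
  | cons a w2 ih =>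
    intro i hocc
    rw [List.flatMap_cons, List.append_assoc, occAt_append] at hocc
    obtain ⟨h1, h2⟩ := hocc
    rcases block_cases himg i with ⟨hu0, hlen, hz⟩ | ⟨hu1, hlen, hz, ho⟩
    · -- u' i = 0, block is [0]
      rcases zmod2_cases_s10 a with ha | ha <;> subst ha
      · -- a = 0 : decode the tail at the next block
        rw [phib_zero] at h2
        simp only [List.length_cons, List.length_nil] at h2
        rw [show fB u' i + 1 = fB u' (i + 1) by omega] at h2
        have := ih (i + 1) h2
        rw [occAt_cons]
        exact ⟨hu0, this⟩
      · -- a = 1 : contradiction, u (fB i + 1) would be 1 but it is a block start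
        exfalso
        rw [phib_one] at h1
        rw [show ([0, 1] : Word) = [0] ++ [1] by rfl, occAt_append, occAt_singleton,
          occAt_singleton] at h1
        have h11 : u (fB u' i + 1) = 1 := by simpa using h1.2
        rw [show fB u' i + 1 = fB u' (i + 1) by omega] at h11
        rw [u_fB_eq_zero himg (i + 1)] at h11
        exact one_ne_zero h11.symm
    · -- u' i = 1, block is [0, 1]
      rcases zmod2_cases_s10 a with ha | ha <;> subst ha
      · -- a = 0 : contradiction, next letter of the image must be 0 but u (fB i + 1) = 1
        exfalso
        rw [phib_zero] at h2
        simp only [List.length_cons, List.length_nil] at h2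
        obtain ⟨L, hL⟩ := head_zero w2
        rw [hL, occAt_cons] at h2
        rw [h2.1] at ho
        exact one_ne_zero ho.symm
      · -- a = 1 : decode the tail at the next block
        rw [phib_one] at h2
        simp only [List.length_cons, List.length_nil] at h2
        rw [show fB u' i + 2 = fB u' (i + 1) by omega] at h2
        have := ih (i + 1) h2
        rw [occAt_cons]
        exact ⟨hu1, this⟩

/-- full characterization of occurrences of `φ_b(w) ++ [0]` in `u`. -/
lemma occ_iff {u' u : ℕ → ZMod 2} (himg : SubstImage phib u' u) (w : Word) (m : ℕ) :
    OccAt u (w.flatMap phib ++ [0]) m ↔ ∃ i, m = fB u' i ∧ OccAt u' w i := by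
  constructor
  · intro h
    obtain ⟨L, hL⟩ := head_zero w
    have hm : u m = 0 := by
      rw [hL, occAt_cons] at h
      exact h.1
    obtain ⟨i, rfl⟩ := (zero_iff_fB himg m).mp hm
    exact ⟨i, rfl, occ_decode himg w i h⟩
  · rintro ⟨i, rfl, h⟩
    exact occ_forward himg h

lemma sInf_image_strictMono {f : ℕ → ℕ} (hf : StrictMono f) (h0 : f 0 = 0) (S : Set ℕ) :
    sInf (f '' S) = f (sInf S) := by
  rcases S.eq_empty_or_nonempty with rfl | hS
  · simp [Nat.sInf_empty, h0]
  · apply le_antisymm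
    · exact Nat.sInf_le ⟨sInf S, Nat.sInf_mem hS, rfl⟩
    · apply le_csInf (hS.image f)
      rintro m ⟨i, hi, rfl⟩
      exact hf.monotone (Nat.sInf_le hi)

/-- transfer of `Nat.nth` through a strictly monotone renumbering of the truth set. -/
lemma nth_transfer {f : ℕ → ℕ} (hf : StrictMono f) (h0 : f 0 = 0) {p q : ℕ → Prop}
    (hpq : ∀ m, q m ↔ ∃ i, p i ∧ m = f i) : ∀ n, Nat.nth q n = f (Nat.nth p n) := by
  intro n
  induction n using Nat.strong_induction_on with
  | _ n ih =>
    rw [Nat.nth_eq_sInf q n, Nat.nth_eq_sInf p n]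
    rw [← sInf_image_strictMono hf h0]
    congr 1
    ext m
    simp only [Set.mem_setOf_eq, Set.mem_image]
    constructor
    · rintro ⟨hq, hm⟩
      obtain ⟨i, hp, rfl⟩ := (hpq m).mp hq
      refine ⟨i, ⟨hp, fun k hk => ?_⟩, rfl⟩
      have := hm k hk
      rw [ih k hk] at this
      exact hf.lt_iff_lt.mp this
    · rintro ⟨i, ⟨hp, hi⟩, rfl⟩
      refine ⟨(hpq _).mpr ⟨i, hp, rfl⟩, fun k hk => ?_⟩
      rw [ih k hk]
      exact hf.lt_iff_lt.mpr (hi k hk)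

/-- `flatMap phib` is injective. -/
lemma flatMap_phib_head (x : Word) : x.flatMap phib = [] ∨ ∃ L, x.flatMap phib = 0 :: L := by
  cases x with
  | nil => exact Or.inl rfl
  | cons a t =>
    right
    rcases zmod2_cases_s10 a with h | h <;> subst h
    · exact ⟨t.flatMap phib, by simp [phib_zero]⟩
    · exact ⟨[1] ++ t.flatMap phib, by simp [phib_one]⟩

lemma flatMap_phib_injective : Function.Injective (fun w : Word => w.flatMap phib) := by
  intro x
  induction x with
  | nil =>
    intro y h
    cases y with
    | nil => rfl
    | cons b t =>
      exfalso
      simp only [List.flatMap_nil, List.flatMap_cons] at h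
      rcases zmod2_cases_s10 b with hb | hb <;> subst hb <;>
        simp [phib_zero, phib_one] at h
  | cons a x ihx =>
    intro y h
    cases y with
    | nil =>
      exfalso
      simp only [List.flatMap_nil, List.flatMap_cons] at h
      rcases zmod2_cases_s10 a with ha | ha <;> subst ha <;>
        simp [phib_zero, phib_one] at h
    | cons b t =>
      simp only [List.flatMap_cons] at h
      rcases zmod2_cases_s10 a with ha | ha <;> rcases zmod2_cases_s10 b with hb | hb <;>
          subst ha <;> subst hb
      · rw [phib_zero] at h
        have := List.append_cancel_left h
        rw [ihx this]
      · exfalso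
        rw [phib_zero, phib_one] at h
        simp only [List.cons_append, List.nil_append, List.cons.injEq, true_and] at h
        rcases flatMap_phib_head x with hx | ⟨L, hx⟩ <;> rw [hx] at h <;>
          simp at h <;> try exact one_ne_zero h.1.symm
      · exfalso
        rw [phib_zero, phib_one] at h
        simp only [List.cons_append, List.nil_append, List.cons.injEq, true_and] at h
        rcases flatMap_phib_head t with hx | ⟨L, hx⟩ <;> rw [hx] at h <;>
          simp at h <;> try exact one_ne_zero h.1
      · rw [phib_one] at h
        have := List.append_cancel_left h
        rw [ihx this]



/-- segment lemma in subtraction form. -/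
lemma segment_eq' {u' u : ℕ → ZMod 2} (himg : SubstImage phib u' u) {a b : ℕ} (hab : a ≤ b) :
    (List.ofFn fun t : Fin (fB u' b - fB u' a) => u (fB u' a + t)) =
      (List.ofFn fun t : Fin (b - a) => u' (a + t)).flatMap phib := by
  obtain ⟨d, rfl⟩ := Nat.exists_eq_add_of_le hab
  rw [show a + d - a = d by omega]
  exact segment_eq himg a d

lemma returnWords_image {u' u : ℕ → ZMod 2} (himg : SubstImage phib u' u) (w : Word) :
    ReturnWords u (w.flatMap phib ++ [0]) = (fun r : Word => r.flatMap phib) '' ReturnWords u' w := by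
  ext r
  constructor
  · rintro ⟨i, j, hi, hj, hij, hgap, rfl⟩
    obtain ⟨a, rfl, ha⟩ := (occ_iff himg w i).mp hi
    obtain ⟨b, rfl, hb⟩ := (occ_iff himg w j).mp hj
    have hab : a < b := (fB_strictMono u').lt_iff_lt.mp hij
    refine ⟨List.ofFn fun t : Fin (b - a) => u' (a + t), ⟨a, b, ha, hb, hab, ?_, rfl⟩, ?_⟩
    · intro t h1 h2 hocc
      exact hgap (fB u' t) ((fB_strictMono u').lt_iff_lt.mpr h1)
        ((fB_strictMono u').lt_iff_lt.mpr h2) ((occ_iff himg w _).mpr ⟨t, rfl, hocc⟩)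
    · exact (segment_eq' himg hab.le).symm
  · rintro ⟨r₀, ⟨a, b, ha, hb, hab, hgap, rfl⟩, rfl⟩
    refine ⟨fB u' a, fB u' b, (occ_iff himg w _).mpr ⟨a, rfl, ha⟩,
      (occ_iff himg w _).mpr ⟨b, rfl, hb⟩, (fB_strictMono u').lt_iff_lt.mpr hab, ?_, ?_⟩
    · intro t h1 h2 hocc
      obtain ⟨c, rfl, hc⟩ := (occ_iff himg w t).mp hocc
      exact hgap c ((fB_strictMono u').lt_iff_lt.mp h1) ((fB_strictMono u').lt_iff_lt.mp h2) hc
    · simpa using (segment_eq' himg hab.le).symm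

lemma nth_occ_transfer {u' u : ℕ → ZMod 2} (himg : SubstImage phib u' u) (w : Word) (n : ℕ) :
    Nat.nth (OccAt u (w.flatMap phib ++ [0])) n = fB u' (Nat.nth (OccAt u' w) n) :=
  nth_transfer (fB_strictMono u') (fB_zero u')
    (fun m => (occ_iff himg w m).trans
      ⟨fun ⟨i, h1, h2⟩ => ⟨i, h2, h1⟩, fun ⟨i, h1, h2⟩ => ⟨i, h2, h1⟩⟩) n

lemma derivated_transfer {u' u : ℕ → ZMod 2} (himg : SubstImage phib u' u) (w : Word) (n : ℕ) :
    derivated u (w.flatMap phib ++ [0]) n = (derivated u' w n).flatMap phib := by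
  unfold derivated
  rw [nth_occ_transfer himg w n, nth_occ_transfer himg w (n + 1)]
  set a := Nat.nth (OccAt u' w) n with ha
  set b := Nat.nth (OccAt u' w) (n + 1) with hb
  rcases le_or_gt a b with h | h
  · exact segment_eq' himg h
  · have h1 : fB u' b - fB u' a = 0 := by
      have := (fB_strictMono u') h
      omega
    have h2 : b - a = 0 := by omega
    rw [List.eq_nil_of_length_eq_zero
        (l := List.ofFn fun t : Fin (fB u' b - fB u' a) => u (fB u' a + t)) (by simp [h1]),
      List.eq_nil_of_length_eq_zero (l := List.ofFn fun t : Fin (b - a) => u' (a + t))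
        (by simp [h2])]
    simp
end Aux

/-- let `u = φ_b(u')` with `u'`, `u` Sturmian. Then `r'`, `s'` are the
return words to a bispecial prefix `w'` of `u'` iff `φ_b(r')`, `φ_b(s')` are the return
words to the bispecial prefix `φ_b(w')0` of `u`; moreover the derivated sequence of `u`
to `φ_b(w')0` equals (letter by letter, under the renaming `r' ↦ φ_b(r')`) the
derivated sequence of `u'` to `w'`. -/
theorem return_words_under_phib (u' u : ℕ → ZMod 2)
    (hu' : IsSturmian u') (hu : IsSturmian u) (himg : SubstImage phib u' u)
    (w' : Word) (hpref : w' = List.ofFn fun i : Fin w'.length => u' i)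
    (hbis : Bispecial u' w') :
    (∀ r' s' : Word, r' ≠ s' →
      (ReturnWords u' w' = {r', s'} ↔
        ReturnWords u (w'.flatMap phib ++ [0]) = {r'.flatMap phib, s'.flatMap phib})) ∧
    (∀ n, derivated u (w'.flatMap phib ++ [0]) n = (derivated u' w' n).flatMap phib) := by
  refine ⟨fun r' s' _hne => ?_, derivated_transfer himg w'⟩
  have himage : ({r'.flatMap phib, s'.flatMap phib} : Set Word) =
      (fun r : Word => r.flatMap phib) '' {r', s'} := by
    simp [Set.image_insert_eq]
  rw [returnWords_image himg w', himage, Set.image_eq_image flatMap_phib_injective]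
end

section
/- Let u be a standard Sturmian sequence with directive sequence z ∈ {b,β}^ℕ (containing infinitely many of each letter), i.e. u = φ_{z_0}φ_{z_1}...φ_{z_{n-1}}(u^{(n)}) for standard Sturmian sequences u^{(n)}. Then for every n, the derivated sequence of u to its n-th bispecial prefix w^{(n)} is the standard Sturmian sequence with directive sequence z_n z_{n+1} z_{n+2} ...; moreover, if z_n = b then the more frequent return word to w^{(n)} is φ_{z_0...z_{n-1}}(0) and the less frequent is φ_{z_0...z_{n-1}}(1), and if z_n = β the roles of 0 and 1 are swapped. -/
/-- Prepend a letter to an infinite sequence. -/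
def consL (a : ZMod 2) (s : ℕ → ZMod 2) : ℕ → ZMod 2 :=
  fun n => match n with
  | 0 => a
  | k + 1 => s k

/-- A standard Sturmian sequence: both `0u` and `1u` are Sturmian. -/
def IsStandardSturmian (s : ℕ → ZMod 2) : Prop :=
  IsSturmian (consL 0 s) ∧ IsSturmian (consL 1 s)

/-- The morphism `φ_β : 0 → 10, 1 → 1`. -/
def phibeta (a : ZMod 2) : Word := if a = 0 then [1, 0] else [1]

/-- The elementary morphism labelled by a letter of `{b, β}` (`true = b`). -/
def phi (c : Bool) : ZMod 2 → Word := if c then phib else phibeta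

/-- The composition `φ_{z₀} φ_{z₁} ⋯ φ_{z_{n-1}}`, as a substitution. -/
def compPhi (z : ℕ → Bool) : ℕ → ZMod 2 → Word
  | 0 => fun a => [a]
  | n + 1 => fun a => (phi (z n) a).flatMap (compPhi z n)

/-- Number of occurrences of the letter `a` among the first `N` letters of `s`. -/
def cnt (s : ℕ → ZMod 2) (a : ZMod 2) (N : ℕ) : ℕ :=
  ((Finset.range N).filter fun i => s i = a).card

/-!
Write `a` for the head letter of `φ_c` (`0` for `b`, `1` for `β`), so that `φ_c` maps `a ↦ a` and
`a + 1 ↦ a (a + 1)`. In `t = φ_c(s)` the letter `a` occurs exactly at the starts of the blocks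
`φ_c(s k)`, every `a + 1` sits between two `a`'s, and the letter after the `k`-th block start is
`s k`. Hence the occurrences of `φ_c(w) a` in `t` are exactly the block starts of the occurrences
of `w` in `s`, `φ_c(w) a` is bispecial in `t` iff `w` is bispecial in `s`, and every nonempty
bispecial prefix of `t` ends in `a` and so has this form.

Since `φ_c` is injective on sequences, the hypotheses force the tower `u⁽ⁿ⁾ = φ_{zₙ}(u⁽ⁿ⁺¹⁾)`.
Along it, the bispecial prefixes of `u` are `w⁽⁰⁾ = ε` and `w⁽ⁿ⁺¹⁾ = φ_{z₀⋯z_{n-1}}(aₙ) w⁽ⁿ⁾`,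
and the occurrences of `w⁽ⁿ⁾` in `u` are exactly the starts of the blocks
`φ_{z₀⋯z_{n-1}}(u⁽ⁿ⁾ₖ)`, so these blocks are the return words. For the frequencies: in `φ_c(s)`
every `a + 1` is preceded by an `a`, and an `a` of `s` becomes an `a` followed by another `a`.
-/

namespace Sturmian

lemma letter_eq_or_eq_add_one (x y : ZMod 2) : x = y ∨ x = y + 1 := by
  revert x y; decide

lemma letter_ne_add_one (x : ZMod 2) : x ≠ x + 1 := by
  revert x; decide

section Occurrences

variable {s : ℕ → ZMod 2}

def seqPrefix (s : ℕ → ZMod 2) (n : ℕ) : Word := List.ofFn fun i : Fin n => s i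

@[simp] lemma length_seqPrefix (n : ℕ) : (seqPrefix s n).length = n := by
  simp [seqPrefix]

@[simp] lemma getElem_seqPrefix {n i : ℕ} (h : i < (seqPrefix s n).length) :
    (seqPrefix s n)[i] = s i := by
  simp [seqPrefix]

lemma seqPrefix_succ (n : ℕ) : seqPrefix s (n + 1) = seqPrefix s n ++ [s n] :=
  List.ofFn_succ_last

lemma seqPrefix_prefix {m n : ℕ} (h : m ≤ n) : seqPrefix s m <+: seqPrefix s n :=
  List.prefix_iff_eq_take.2 <| List.ext_getElem (by simp [h]) (by simp)

lemma occAt_iff {w : Word} {m : ℕ} :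
    OccAt s w m ↔ ∀ i (hi : i < w.length), w[i] = s (m + i) := by
  simp [OccAt, List.ext_getElem_iff]

lemma occAt_nil (m : ℕ) : OccAt s [] m := by
  simp [occAt_iff]

lemma occAt_append {w₁ w₂ : Word} {m : ℕ} :
    OccAt s (w₁ ++ w₂) m ↔ OccAt s w₁ m ∧ OccAt s w₂ (m + w₁.length) := by
  simp only [occAt_iff, List.length_append]
  constructor
  · intro h
    refine ⟨fun i hi => ?_, fun i hi => ?_⟩
    · simpa [List.getElem_append_left hi] using h i (by omega)
    · simpa [Nat.add_assoc] using h (w₁.length + i) (by omega)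
  · rintro ⟨h₁, h₂⟩ i hi
    rcases Nat.lt_or_ge i w₁.length with h | h
    · rw [List.getElem_append_left h, h₁ i h]
    · rw [List.getElem_append_right h, h₂ _ (by omega)]
      congr 1; omega

lemma occAt_singleton {a : ZMod 2} {m : ℕ} : OccAt s [a] m ↔ s m = a := by
  simp [occAt_iff, eq_comm]

lemma occAt_cons {a : ZMod 2} {w : Word} {m : ℕ} :
    OccAt s (a :: w) m ↔ s m = a ∧ OccAt s w (m + 1) := by
  rw [← List.singleton_append, occAt_append, occAt_singleton]
  rfl

lemma occAt_seqPrefix (n : ℕ) : OccAt s (seqPrefix s n) 0 := by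
  simp [occAt_iff]

lemma occAt_zero_iff {w : Word} : OccAt s w 0 ↔ w = seqPrefix s w.length := by
  simp [OccAt, seqPrefix]

end Occurrences

lemma bispecial_iff_forall {s : ℕ → ZMod 2} {w : Word} :
    Bispecial s w ↔ ∀ x, IsFactor s (x :: w) ∧ IsFactor s (w ++ [x]) := by
  simp only [Bispecial, LeftSpecial, RightSpecial]
  constructor
  · rintro ⟨⟨h0, h1⟩, h0', h1'⟩ x
    fin_cases x
    exacts [⟨h0, h0'⟩, ⟨h1, h1'⟩]
  · intro h
    exact ⟨⟨(h 0).1, (h 1).1⟩, (h 0).2, (h 1).2⟩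

lemma bispecial_nil {s : ℕ → ZMod 2} (hs : ∀ a, ∃ p, s p = a) : Bispecial s [] :=
  bispecial_iff_forall.2 fun x =>
    have hx : IsFactor s [x] := let ⟨p, hp⟩ := hs x; ⟨p, occAt_singleton.2 hp⟩
    ⟨hx, hx⟩

lemma isFactor_singleton_of_isSturmian {s : ℕ → ZMod 2} (hs : IsSturmian s) (a : ZMod 2) :
    IsFactor s [a] := by
  by_contra h
  have hsub : {w : Word | w.length = 1 ∧ IsFactor s w} ⊆ {[a + 1]} := by
    rintro w ⟨hl, hw⟩
    obtain ⟨x, rfl⟩ := List.length_eq_one_iff.1 hl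
    rcases letter_eq_or_eq_add_one x a with rfl | rfl
    · exact absurd hw h
    · rfl
  have hcard := Set.ncard_le_ncard hsub
  rw [Set.ncard_singleton] at hcard
  have h1 := hs 1
  unfold Cplx at h1
  omega

lemma exists_eq_of_isStandardSturmian {s : ℕ → ZMod 2} (hs : IsStandardSturmian s) (a : ZMod 2) :
    ∃ p, s p = a := by
  have hsturm : IsSturmian (consL (a + 1) s) := by
    fin_cases a
    exacts [hs.2, hs.1]
  obtain ⟨m, hm⟩ := isFactor_singleton_of_isSturmian hsturm a
  cases m with
  | zero => exact absurd (occAt_singleton.1 hm) (letter_ne_add_one a).symm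
  | succ m => exact ⟨m, occAt_singleton.1 hm⟩

lemma nth_eq_of_strictMono {p : ℕ → Prop} {f : ℕ → ℕ} (hf : StrictMono f)
    (hp : ∀ m, p m ↔ m ∈ Set.range f) : Nat.nth p = f := by
  have hset : Set.ofPred p = Set.range f := Set.ext hp
  have hinf : (Set.ofPred p).Infinite := hset ▸ Set.infinite_range_of_injective hf.injective
  exact ((Nat.nth_strictMono hinf).range_inj hf).1 (by rw [Nat.range_nth_of_infinite hinf, hset])

section Substitutions

lemma flatMap_ne_nil {l : Word} {f : ZMod 2 → Word} (hl : l ≠ []) (hf : ∀ a, f a ≠ []) :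
    l.flatMap f ≠ [] := fun h => by
  obtain ⟨x, hx⟩ := List.exists_mem_of_ne_nil _ hl
  exact hf x (List.flatMap_eq_nil_iff.1 h x hx)

variable {f g : ZMod 2 → Word} {s t : ℕ → ZMod 2}

def blockStart (f : ZMod 2 → Word) (s : ℕ → ZMod 2) (k : ℕ) : ℕ :=
  ((seqPrefix s k).flatMap f).length

/-- The image `f(s)`; junk unless `f` is nonerasing. -/
def substSeq (f : ZMod 2 → Word) (s : ℕ → ZMod 2) (p : ℕ) : ZMod 2 :=
  ((seqPrefix s (p + 1)).flatMap f).getD p 0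

@[simp] lemma blockStart_zero : blockStart f s 0 = 0 := by
  simp [blockStart, seqPrefix]

lemma blockStart_succ (k : ℕ) :
    blockStart f s (k + 1) = blockStart f s k + (f (s k)).length := by
  simp [blockStart, seqPrefix_succ]

lemma blockStart_add_length {w : Word} {k : ℕ} (hw : OccAt s w k) :
    blockStart f s (k + w.length) = blockStart f s k + (w.flatMap f).length := by
  induction w generalizing k with
  | nil => simp
  | cons a w ih =>
    obtain ⟨rfl, hrest⟩ := occAt_cons.1 hw
    rw [List.length_cons, ← Nat.add_assoc, Nat.add_right_comm, ih hrest, blockStart_succ]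
    simp [Nat.add_assoc]

lemma getD_flatMap_seqPrefix {i j k : ℕ} (hj : i < blockStart f s j) (hk : i < blockStart f s k) :
    ((seqPrefix s j).flatMap f).getD i 0 = ((seqPrefix s k).flatMap f).getD i 0 := by
  wlog hjk : j ≤ k generalizing j k
  · exact (this hk hj (by omega)).symm
  obtain ⟨r, hr⟩ := (seqPrefix_prefix (s := s) hjk).flatMap f
  rw [← hr, List.getD_append _ _ _ _ hj]

variable (hf : ∀ a, f a ≠ [])
include hf

lemma blockStart_strictMono : StrictMono (blockStart f s) :=
  strictMono_nat_of_lt_succ fun k => by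
    rw [blockStart_succ]
    have := List.length_pos_iff.2 (hf (s k))
    omega

lemma lt_blockStart_succ (p : ℕ) : p < blockStart f s (p + 1) :=
  Nat.lt_of_lt_of_le (Nat.lt_succ_self p) (blockStart_strictMono hf).le_apply

lemma exists_blockStart_le_lt (p : ℕ) :
    ∃ k, blockStart f s k ≤ p ∧ p < blockStart f s (k + 1) := by
  have hex : ∃ k, p < blockStart f s (k + 1) := ⟨p, lt_blockStart_succ hf p⟩
  refine ⟨Nat.find hex, ?_, Nat.find_spec hex⟩
  cases h : Nat.find hex with
  | zero => simp
  | succ k => exact not_lt.1 (Nat.find_min hex (h ▸ Nat.lt_succ_self k))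

lemma substSeq_eq_getD {i k : ℕ} (hi : i < blockStart f s k) :
    substSeq f s i = ((seqPrefix s k).flatMap f).getD i 0 :=
  getD_flatMap_seqPrefix (lt_blockStart_succ hf i) hi

lemma seqPrefix_substSeq (k : ℕ) :
    seqPrefix (substSeq f s) (blockStart f s k) = (seqPrefix s k).flatMap f :=
  List.ext_getElem (by simp [blockStart]) fun i hi _ => by
    rw [getElem_seqPrefix, substSeq_eq_getD hf (by simpa using hi), List.getD_eq_getElem]

lemma substSeq_eq_of_substImage (h : SubstImage f s t) : t = substSeq f s := by
  funext p
  obtain ⟨k, r, hr⟩ := h (p + 1)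
  change seqPrefix t (p + 1) ++ r = (seqPrefix s k).flatMap f at hr
  have hp : p < blockStart f s k := by
    have := congrArg List.length hr
    simp only [List.length_append, length_seqPrefix] at this
    simp only [blockStart]
    omega
  rw [substSeq_eq_getD hf hp, ← hr, List.getD_append _ _ _ _ (by simp),
    List.getD_eq_getElem _ _ (by simp)]
  simp

lemma occAt_blockStart (k : ℕ) : OccAt (substSeq f s) (f (s k)) (blockStart f s k) := by
  have h := occAt_seqPrefix (s := substSeq f s) (blockStart f s (k + 1))
  rw [seqPrefix_substSeq hf, seqPrefix_succ, List.flatMap_append, occAt_append] at h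
  simpa [blockStart] using h.2

lemma occAt_flatMap {w : Word} {k : ℕ} (hw : OccAt s w k) :
    OccAt (substSeq f s) (w.flatMap f) (blockStart f s k) := by
  induction w generalizing k with
  | nil => exact occAt_nil _
  | cons a w ih =>
    obtain ⟨rfl, hrest⟩ := occAt_cons.1 hw
    rw [List.flatMap_cons, occAt_append, ← blockStart_succ]
    exact ⟨occAt_blockStart hf k, ih hrest⟩

lemma blockStart_comp (k : ℕ) :
    blockStart g (substSeq f s) (blockStart f s k) = blockStart (fun a => (f a).flatMap g) s k := by
  rw [blockStart, seqPrefix_substSeq hf, List.flatMap_assoc, blockStart]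

lemma substSeq_comp (hg : ∀ a, g a ≠ []) :
    substSeq g (substSeq f s) = substSeq (fun a => (f a).flatMap g) s := by
  refine substSeq_eq_of_substImage (fun a => flatMap_ne_nil (hf a) hg) fun n => ⟨n, ?_⟩
  show seqPrefix _ n <+: (seqPrefix s n).flatMap _
  rw [← List.flatMap_assoc, ← seqPrefix_substSeq hf, ← seqPrefix_substSeq hg]
  exact seqPrefix_prefix
    ((blockStart_strictMono hf).le_apply.trans (blockStart_strictMono hg).le_apply)

omit hf in
lemma substSeq_singleton : substSeq (fun a => [a]) s = s :=
  (substSeq_eq_of_substImage (by simp) fun n => ⟨n, by simp⟩).symm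

lemma derivated_substSeq {w : Word}
    (hocc : ∀ m, OccAt (substSeq f s) w m ↔ m ∈ Set.range (blockStart f s)) (m : ℕ) :
    derivated (substSeq f s) w m = f (s m) := by
  have hlen : blockStart f s (m + 1) - blockStart f s m = (f (s m)).length := by
    rw [blockStart_succ]; omega
  unfold derivated
  rw [nth_eq_of_strictMono (blockStart_strictMono hf) hocc]
  refine List.ext_getElem (by simp [hlen]) fun i _ hi => ?_
  rw [List.getElem_ofFn]
  exact (occAt_iff.1 (occAt_blockStart hf m) i hi).symm

end Substitutions

section Phi

def headLetter (c : Bool) : ZMod 2 := if c then 0 else 1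

lemma phi_headLetter (c : Bool) : phi c (headLetter c) = [headLetter c] := by
  cases c <;> decide

lemma phi_headLetter_add_one (c : Bool) :
    phi c (headLetter c + 1) = [headLetter c, headLetter c + 1] := by
  cases c <;> decide

lemma phi_ne_nil (c : Bool) (x : ZMod 2) : phi c x ≠ [] := by
  revert c x; decide

lemma phi_eq_cons (c : Bool) (x : ZMod 2) : ∃ r, phi c x = headLetter c :: r := by
  rcases letter_eq_or_eq_add_one x (headLetter c) with rfl | rfl
  · exact ⟨[], phi_headLetter c⟩
  · exact ⟨[headLetter c + 1], phi_headLetter_add_one c⟩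

lemma phi_append_headLetter_eq (c : Bool) (x : ZMod 2) :
    ∃ r, phi c x ++ [headLetter c] = headLetter c :: x :: r := by
  rcases letter_eq_or_eq_add_one x (headLetter c) with rfl | rfl
  · exact ⟨[], by rw [phi_headLetter]; rfl⟩
  · exact ⟨[headLetter c], by rw [phi_headLetter_add_one]; rfl⟩

lemma flatMap_phi_append_eq_cons (c : Bool) (w : Word) :
    ∃ r, w.flatMap (phi c) ++ [headLetter c] = headLetter c :: r := by
  cases w with
  | nil => exact ⟨[], rfl⟩
  | cons x w =>
    obtain ⟨r, hr⟩ := phi_eq_cons c x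
    exact ⟨r ++ w.flatMap (phi c) ++ [headLetter c], by simp [hr]⟩

end Phi

section PhiImage

variable {c : Bool} {s : ℕ → ZMod 2}

lemma substSeq_phi_blockStart (k : ℕ) :
    substSeq (phi c) s (blockStart (phi c) s k) = headLetter c := by
  obtain ⟨r, hr⟩ := phi_eq_cons c (s k)
  have h := occAt_blockStart (phi_ne_nil c) (s := s) k
  rw [hr, occAt_cons] at h
  exact h.1

lemma blockStart_phi_succ_of_eq {k : ℕ} (hk : s k = headLetter c) :
    blockStart (phi c) s (k + 1) = blockStart (phi c) s k + 1 := by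
  rw [blockStart_succ, hk, phi_headLetter]; rfl

lemma blockStart_phi_succ_of_eq_add_one {k : ℕ} (hk : s k = headLetter c + 1) :
    blockStart (phi c) s (k + 1) = blockStart (phi c) s k + 2 := by
  rw [blockStart_succ, hk, phi_headLetter_add_one]; rfl

lemma substSeq_phi_blockStart_add_one (k : ℕ) :
    substSeq (phi c) s (blockStart (phi c) s k + 1) = s k := by
  rcases letter_eq_or_eq_add_one (s k) (headLetter c) with hk | hk
  · rw [← blockStart_phi_succ_of_eq hk, substSeq_phi_blockStart, hk]
  · have h := occAt_blockStart (phi_ne_nil c) (s := s) k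
    rw [hk, phi_headLetter_add_one, occAt_cons, occAt_singleton] at h
    rw [h.2, hk]

lemma eq_blockStart_or_eq_blockStart_add_one (p : ℕ) :
    (∃ k, p = blockStart (phi c) s k) ∨
      ∃ k, s k = headLetter c + 1 ∧ p = blockStart (phi c) s k + 1 := by
  obtain ⟨k, hle, hlt⟩ := exists_blockStart_le_lt (phi_ne_nil c) (s := s) p
  rcases Nat.eq_or_lt_of_le hle with h | h
  · exact Or.inl ⟨k, h.symm⟩
  rcases letter_eq_or_eq_add_one (s k) (headLetter c) with hk | hk
  · rw [blockStart_phi_succ_of_eq hk] at hlt; omega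
  · rw [blockStart_phi_succ_of_eq_add_one hk] at hlt
    exact Or.inr ⟨k, hk, by omega⟩

lemma substSeq_phi_eq_headLetter_iff {p : ℕ} :
    substSeq (phi c) s p = headLetter c ↔ p ∈ Set.range (blockStart (phi c) s) := by
  refine ⟨fun hp => ?_, fun ⟨k, hk⟩ => hk ▸ substSeq_phi_blockStart k⟩
  rcases eq_blockStart_or_eq_blockStart_add_one (c := c) (s := s) p with ⟨k, rfl⟩ | ⟨k, hk, rfl⟩
  · exact ⟨k, rfl⟩
  · rw [substSeq_phi_blockStart_add_one, hk] at hp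
    exact absurd hp.symm (letter_ne_add_one _)

lemma exists_of_substSeq_phi_eq_add_one {p : ℕ} (hp : substSeq (phi c) s p = headLetter c + 1) :
    ∃ k, s k = headLetter c + 1 ∧ p = blockStart (phi c) s k + 1 := by
  rcases eq_blockStart_or_eq_blockStart_add_one (c := c) (s := s) p with ⟨k, rfl⟩ | h
  · rw [substSeq_phi_blockStart] at hp
    exact absurd hp (letter_ne_add_one _)
  · exact h

lemma substSeq_phi_injective (c : Bool) : Function.Injective (substSeq (phi c)) := by
  intro s s' h
  have hblock : blockStart (phi c) s = blockStart (phi c) s' := by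
    refine ((blockStart_strictMono (phi_ne_nil c)).range_inj
      (blockStart_strictMono (phi_ne_nil c))).1 (Set.ext fun p => ?_)
    rw [← substSeq_phi_eq_headLetter_iff, ← substSeq_phi_eq_headLetter_iff, h]
  funext k
  rw [← substSeq_phi_blockStart_add_one (s := s), ← substSeq_phi_blockStart_add_one (s := s'), h,
    hblock]

lemma substSeq_phi_pred_of_eq_add_one {p : ℕ} (hp : substSeq (phi c) s p = headLetter c + 1) :
    ∃ q, p = q + 1 ∧ substSeq (phi c) s q = headLetter c := by
  obtain ⟨k, -, rfl⟩ := exists_of_substSeq_phi_eq_add_one hp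
  exact ⟨_, rfl, substSeq_phi_blockStart k⟩

lemma substSeq_phi_succ_of_eq_add_one {p : ℕ} (hp : substSeq (phi c) s p = headLetter c + 1) :
    substSeq (phi c) s (p + 1) = headLetter c := by
  obtain ⟨k, hk, rfl⟩ := exists_of_substSeq_phi_eq_add_one hp
  rw [← blockStart_phi_succ_of_eq_add_one hk, substSeq_phi_blockStart]

lemma isFactor_substSeq_phi_cons_iff (x : ZMod 2) (v : Word) :
    IsFactor (substSeq (phi c) s) (x :: v) ↔ IsFactor (substSeq (phi c) s) (phi c x ++ v) := by
  rcases letter_eq_or_eq_add_one x (headLetter c) with rfl | rfl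
  · rw [phi_headLetter]; rfl
  rw [phi_headLetter_add_one, List.cons_append, List.singleton_append]
  constructor
  · rintro ⟨m, hm⟩
    obtain ⟨q, rfl, hq⟩ := substSeq_phi_pred_of_eq_add_one (occAt_cons.1 hm).1
    exact ⟨q, occAt_cons.2 ⟨hq, hm⟩⟩
  · rintro ⟨m, hm⟩
    exact ⟨m + 1, (occAt_cons.1 hm).2⟩

lemma isFactor_substSeq_phi_append_pair_iff (v : Word) (x : ZMod 2) :
    IsFactor (substSeq (phi c) s) (v ++ [headLetter c, x]) ↔
      IsFactor (substSeq (phi c) s) (v ++ phi c x ++ [headLetter c]) := by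
  rcases letter_eq_or_eq_add_one x (headLetter c) with rfl | rfl
  · rw [phi_headLetter, List.append_assoc]; rfl
  rw [phi_headLetter_add_one]
  constructor
  · rintro ⟨m, hm⟩
    have hlast := (occAt_cons.1 (occAt_cons.1 (occAt_append.1 hm).2).2)
    refine ⟨m, occAt_append.2 ⟨hm, occAt_singleton.2 ?_⟩⟩
    simpa [Nat.add_assoc] using substSeq_phi_succ_of_eq_add_one hlast.1
  · rintro ⟨m, hm⟩
    exact ⟨m, (occAt_append.1 hm).1⟩

lemma letter_eq_of_occAt_phi_append {x : ZMod 2} {k : ℕ}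
    (h : OccAt (substSeq (phi c) s) (phi c x ++ [headLetter c]) (blockStart (phi c) s k)) :
    s k = x := by
  obtain ⟨r, hr⟩ := phi_append_headLetter_eq c x
  rw [hr, occAt_cons, occAt_cons] at h
  rw [← h.2.1, substSeq_phi_blockStart_add_one]

lemma occAt_of_occAt_flatMap_phi {w : Word} {k : ℕ}
    (h : OccAt (substSeq (phi c) s) (w.flatMap (phi c) ++ [headLetter c])
      (blockStart (phi c) s k)) : OccAt s w k := by
  induction w generalizing k with
  | nil => exact occAt_nil k
  | cons x w ih =>
    rw [List.flatMap_cons, List.append_assoc, occAt_append] at h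
    obtain ⟨r, hr⟩ := flatMap_phi_append_eq_cons c w
    have hx : s k = x := by
      refine letter_eq_of_occAt_phi_append (occAt_append.2 ⟨h.1, occAt_singleton.2 ?_⟩)
      exact (occAt_cons.1 (hr ▸ h.2)).1
    refine occAt_cons.2 ⟨hx, ih ?_⟩
    rw [blockStart_succ, hx]
    exact h.2

lemma occAt_substSeq_phi_iff {w : Word} {m : ℕ} :
    OccAt (substSeq (phi c) s) (w.flatMap (phi c) ++ [headLetter c]) m ↔
      ∃ k, m = blockStart (phi c) s k ∧ OccAt s w k := by
  constructor
  · intro h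
    obtain ⟨r, hr⟩ := flatMap_phi_append_eq_cons c w
    obtain ⟨k, rfl⟩ := substSeq_phi_eq_headLetter_iff.1 (occAt_cons.1 (hr ▸ h)).1
    exact ⟨k, rfl, occAt_of_occAt_flatMap_phi h⟩
  · rintro ⟨k, rfl, hk⟩
    refine occAt_append.2 ⟨occAt_flatMap (phi_ne_nil c) hk, occAt_singleton.2 ?_⟩
    rw [← blockStart_add_length hk, substSeq_phi_blockStart]

lemma isFactor_substSeq_phi_iff {w : Word} :
    IsFactor (substSeq (phi c) s) (w.flatMap (phi c) ++ [headLetter c]) ↔ IsFactor s w :=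
  ⟨fun ⟨_, h⟩ => let ⟨k, _, hk⟩ := occAt_substSeq_phi_iff.1 h; ⟨k, hk⟩,
    fun ⟨k, hk⟩ => ⟨_, occAt_substSeq_phi_iff.2 ⟨k, rfl, hk⟩⟩⟩

lemma bispecial_substSeq_phi_iff {w : Word} :
    Bispecial (substSeq (phi c) s) (w.flatMap (phi c) ++ [headLetter c]) ↔ Bispecial s w := by
  simp only [bispecial_iff_forall]
  refine forall_congr' fun x => and_congr ?_ ?_
  · rw [isFactor_substSeq_phi_cons_iff, ← List.append_assoc, ← List.flatMap_cons,
      isFactor_substSeq_phi_iff]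
  · rw [List.append_assoc, List.singleton_append, isFactor_substSeq_phi_append_pair_iff,
      ← List.flatMap_singleton (phi c) x, ← List.flatMap_append, isFactor_substSeq_phi_iff]

lemma exists_eq_flatMap_phi_of_occAt_zero {w : Word} (h0 : OccAt (substSeq (phi c) s) w 0)
    (hw : w ≠ []) (hfac : IsFactor (substSeq (phi c) s) (w ++ [headLetter c + 1])) :
    ∃ j, w = (seqPrefix s j).flatMap (phi c) ++ [headLetter c] := by
  obtain ⟨v, y, rfl⟩ := (List.eq_nil_or_concat' w).resolve_left hw
  have hy : y = headLetter c := by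
    obtain ⟨m, hm⟩ := hfac
    rw [List.append_assoc, occAt_append, List.singleton_append, occAt_cons, occAt_singleton] at hm
    obtain ⟨q, hq, hqa⟩ := substSeq_phi_pred_of_eq_add_one hm.2.2
    obtain rfl : q = m + v.length := by omega
    exact hm.2.1.symm.trans hqa
  subst hy
  rw [occAt_append, occAt_singleton, Nat.zero_add] at h0
  obtain ⟨j, hj⟩ := substSeq_phi_eq_headLetter_iff.1 h0.2
  refine ⟨j, ?_⟩
  rw [occAt_zero_iff.1 h0.1, ← hj, seqPrefix_substSeq (phi_ne_nil c)]

lemma cnt_substSeq_phi_add_one_lt (hs : ∃ p, s p = headLetter c) :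
    ∃ N₀, ∀ N, N₀ ≤ N → cnt (substSeq (phi c) s) (headLetter c + 1) N <
      cnt (substSeq (phi c) s) (headLetter c) N := by
  classical
  obtain ⟨p, hp⟩ := hs
  set t := substSeq (phi c) s
  set q := blockStart (phi c) s p
  have hpos : ∀ i, t i = headLetter c + 1 → 1 ≤ i := fun i hi => by
    obtain ⟨k, -, rfl⟩ := exists_of_substSeq_phi_eq_add_one hi
    omega
  refine ⟨q + 1, fun N hN => ?_⟩
  -- `i ↦ i - 1` sends the `a + 1`'s to `a`'s other than the one at `q`, which precedes an `a`
  have hmaps : ∀ i ∈ (Finset.range N).filter (t · = headLetter c + 1),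
      i - 1 ∈ ((Finset.range N).filter (t · = headLetter c)).erase q := by
    intro i hi
    simp only [Finset.mem_filter, Finset.mem_range] at hi
    obtain ⟨k, hk, rfl⟩ := exists_of_substSeq_phi_eq_add_one hi.2
    simp only [Finset.mem_erase, Finset.mem_filter, Finset.mem_range, Nat.add_sub_cancel]
    refine ⟨fun he => ?_, by omega, substSeq_phi_blockStart k⟩
    rw [(blockStart_strictMono (phi_ne_nil c)).injective he, hp] at hk
    exact letter_ne_add_one _ hk
  have hinj : Set.InjOn (· - 1) ((Finset.range N).filter (t · = headLetter c + 1) : Set ℕ) :=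
    fun i hi j hj hij => by
      have := hpos i (Finset.mem_filter.1 hi).2
      have := hpos j (Finset.mem_filter.1 hj).2
      simp only at hij
      omega
  calc cnt t (headLetter c + 1) N
      ≤ (((Finset.range N).filter (t · = headLetter c)).erase q).card :=
        Finset.card_le_card_of_injOn _ hmaps hinj
    _ < cnt t (headLetter c) N :=
        Finset.card_erase_lt_of_mem (Finset.mem_filter.2 ⟨Finset.mem_range.2 (by omega),
          substSeq_phi_blockStart p⟩)

end PhiImage

section Tower

variable {z : ℕ → Bool}

lemma compPhi_ne_nil (z : ℕ → Bool) (n : ℕ) (a : ZMod 2) : compPhi z n a ≠ [] := by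
  induction n generalizing a with
  | zero => simp [compPhi]
  | succ n ih => exact flatMap_ne_nil (phi_ne_nil _ a) ih

lemma compPhi_zero (z : ℕ → Bool) : compPhi z 0 = fun a => [a] := rfl

@[simp] lemma flatMap_compPhi_zero (w : Word) : w.flatMap (compPhi z 0) = w :=
  List.flatMap_singleton' w

@[simp] lemma blockStart_compPhi_zero (s : ℕ → ZMod 2) (k : ℕ) :
    blockStart (compPhi z 0) s k = k := by
  simp [blockStart]

lemma substSeq_compPhi_succ (n : ℕ) (s : ℕ → ZMod 2) :
    substSeq (compPhi z (n + 1)) s = substSeq (compPhi z n) (substSeq (phi (z n)) s) :=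
  (substSeq_comp (phi_ne_nil _) (compPhi_ne_nil z n)).symm

lemma substSeq_compPhi_injective (z : ℕ → Bool) (n : ℕ) :
    Function.Injective (substSeq (compPhi z n)) := by
  induction n with
  | zero =>
    intro s s' h
    simpa only [compPhi_zero, substSeq_singleton] using h
  | succ n ih =>
    intro s s' h
    rw [substSeq_compPhi_succ, substSeq_compPhi_succ] at h
    exact substSeq_phi_injective _ (ih h)

lemma eq_substSeq_phi_of_forall_eq_substSeq_compPhi {u : ℕ → ZMod 2} {v : ℕ → ℕ → ZMod 2}
    (h : ∀ n, u = substSeq (compPhi z n) (v n)) (n : ℕ) :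
    v n = substSeq (phi (z n)) (v (n + 1)) :=
  substSeq_compPhi_injective z n ((h n).symm.trans (by rw [h (n + 1), substSeq_compPhi_succ]))

def bispecialPrefix (z : ℕ → Bool) : ℕ → Word
  | 0 => []
  | n + 1 => compPhi z n (headLetter (z n)) ++ bispecialPrefix z n

lemma length_bispecialPrefix_strictMono : StrictMono fun n => (bispecialPrefix z n).length :=
  strictMono_nat_of_lt_succ fun n => by
    have := List.length_pos_iff.2 (compPhi_ne_nil z n (headLetter (z n)))
    simp only [bispecialPrefix, List.length_append]
    omega

lemma flatMap_compPhi_succ_append_bispecialPrefix (n : ℕ) (w : Word) :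
    w.flatMap (compPhi z (n + 1)) ++ bispecialPrefix z (n + 1) =
      (w.flatMap (phi (z n)) ++ [headLetter (z n)]).flatMap (compPhi z n) ++
        bispecialPrefix z n := by
  simp [bispecialPrefix, List.flatMap_append, compPhi, List.flatMap_assoc]

variable {v : ℕ → ℕ → ZMod 2} (hv : ∀ n, v n = substSeq (phi (z n)) (v (n + 1)))
include hv

lemma blockStart_compPhi_tower (n k : ℕ) :
    blockStart (compPhi z n) (v n) (blockStart (phi (z n)) (v (n + 1)) k) =
      blockStart (compPhi z (n + 1)) (v (n + 1)) k := by
  rw [hv n]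
  exact blockStart_comp (phi_ne_nil _) k

lemma occAt_tower_iff (n : ℕ) {w : Word} {m : ℕ} :
    OccAt (v 0) (w.flatMap (compPhi z n) ++ bispecialPrefix z n) m ↔
      ∃ k, m = blockStart (compPhi z n) (v n) k ∧ OccAt (v n) w k := by
  induction n generalizing w m with
  | zero => simp [bispecialPrefix]
  | succ n ih =>
    rw [flatMap_compPhi_succ_append_bispecialPrefix, ih]
    constructor
    · rintro ⟨k, rfl, hk⟩
      rw [hv n, occAt_substSeq_phi_iff] at hk
      obtain ⟨j, rfl, hj⟩ := hk
      exact ⟨j, blockStart_compPhi_tower hv n j, hj⟩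
    · rintro ⟨j, rfl, hj⟩
      refine ⟨_, (blockStart_compPhi_tower hv n j).symm, ?_⟩
      rw [hv n]
      exact occAt_substSeq_phi_iff.2 ⟨j, rfl, hj⟩

lemma bispecial_tower_iff (n : ℕ) {w : Word} :
    Bispecial (v 0) (w.flatMap (compPhi z n) ++ bispecialPrefix z n) ↔ Bispecial (v n) w := by
  induction n generalizing w with
  | zero => simp [bispecialPrefix]
  | succ n ih =>
    rw [flatMap_compPhi_succ_append_bispecialPrefix, ih, hv n, bispecial_substSeq_phi_iff]

lemma occAt_zero_tower_iff (n : ℕ) {w : Word} :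
    OccAt (v 0) (w.flatMap (compPhi z n) ++ bispecialPrefix z n) 0 ↔ OccAt (v n) w 0 := by
  rw [occAt_tower_iff hv]
  constructor
  · rintro ⟨k, hk, hw⟩
    obtain rfl : k = 0 := (blockStart_strictMono (compPhi_ne_nil z n)).injective
      (hk.symm.trans blockStart_zero.symm)
    exact hw
  · exact fun hw => ⟨0, blockStart_zero.symm, hw⟩

lemma bispecial_prefix_tower_cases (n : ℕ) {p : Word} (hp0 : OccAt (v 0) p 0)
    (hp : Bispecial (v 0) p) :
    (∃ k < n, p = bispecialPrefix z k) ∨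
      ∃ w : Word, p = w.flatMap (compPhi z n) ++ bispecialPrefix z n := by
  induction n with
  | zero => exact Or.inr ⟨p, by simp [bispecialPrefix]⟩
  | succ n ih =>
    rcases ih with ⟨k, hk, rfl⟩ | ⟨w, rfl⟩
    · exact Or.inl ⟨k, by omega, rfl⟩
    rw [occAt_zero_tower_iff hv] at hp0
    rw [bispecial_tower_iff hv] at hp
    rcases eq_or_ne w [] with rfl | hw
    · exact Or.inl ⟨n, by omega, by simp⟩
    rw [hv n] at hp0 hp
    obtain ⟨j, rfl⟩ := exists_eq_flatMap_phi_of_occAt_zero hp0 hw (bispecial_iff_forall.1 hp _).2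
    exact Or.inr ⟨seqPrefix (v (n + 1)) j, (flatMap_compPhi_succ_append_bispecialPrefix n _).symm⟩

lemma exists_eq_bispecialPrefix {p : Word} (hp0 : OccAt (v 0) p 0) (hp : Bispecial (v 0) p) :
    ∃ k, p = bispecialPrefix z k := by
  rcases bispecial_prefix_tower_cases hv (p.length + 1) hp0 hp with ⟨k, -, hk⟩ | ⟨w, hw⟩
  · exact ⟨k, hk⟩
  · have hlen := congrArg List.length hw
    have := (length_bispecialPrefix_strictMono (z := z)).le_apply (x := p.length + 1)
    simp only [List.length_append] at hlen this
    omega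

lemma occAt_bispecialPrefix_iff (n m : ℕ) :
    OccAt (v 0) (bispecialPrefix z n) m ↔ m ∈ Set.range (blockStart (compPhi z n) (v n)) := by
  simpa [eq_comm, occAt_nil] using occAt_tower_iff hv n (w := []) (m := m)

lemma occAt_zero_bispecialPrefix (n : ℕ) : OccAt (v 0) (bispecialPrefix z n) 0 :=
  (occAt_bispecialPrefix_iff hv n 0).2 ⟨0, blockStart_zero⟩

lemma bispecial_bispecialPrefix (hletters : ∀ n a, ∃ p, v n p = a) (n : ℕ) :
    Bispecial (v 0) (bispecialPrefix z n) := by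
  simpa using (bispecial_tower_iff hv n (w := [])).2 (bispecial_nil (hletters n))

lemma eq_bispecialPrefix_of_enumeration (hletters : ∀ n a, ∃ p, v n p = a)
    {W : ℕ → Word} (hWpref : ∀ n, OccAt (v 0) (W n) 0) (hWbis : ∀ n, Bispecial (v 0) (W n))
    (hWmono : StrictMono fun n => (W n).length)
    (hWall : ∀ w, OccAt (v 0) w 0 → Bispecial (v 0) w → ∃ n, w = W n) :
    W = bispecialPrefix z := by
  have hlen : (fun n => (W n).length) = fun n => (bispecialPrefix z n).length := by
    refine (hWmono.range_inj length_bispecialPrefix_strictMono).1 (Set.ext fun l => ⟨?_, ?_⟩)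
    · rintro ⟨n, rfl⟩
      obtain ⟨k, hk⟩ := exists_eq_bispecialPrefix hv (hWpref n) (hWbis n)
      exact ⟨k, by simp [hk]⟩
    · rintro ⟨k, rfl⟩
      obtain ⟨n, hn⟩ :=
        hWall _ (occAt_zero_bispecialPrefix hv k) (bispecial_bispecialPrefix hv hletters k)
      exact ⟨n, by simp [hn]⟩
  funext n
  obtain ⟨k, hk⟩ := exists_eq_bispecialPrefix hv (hWpref n) (hWbis n)
  obtain rfl : k = n := length_bispecialPrefix_strictMono.injective
    (by simpa [hk] using congrFun hlen n)
  exact hk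

end Tower

end Sturmian

open Sturmian in
theorem derivated_of_standard_general (z : ℕ → Bool) (u : ℕ → ZMod 2)
    (usn : ℕ → ℕ → ZMod 2)
    (hstd : ∀ n, IsStandardSturmian (usn n))
    (himg : ∀ n, SubstImage (compPhi z n) (usn n) u)
    (W : ℕ → Word)
    (hWpref : ∀ n, W n = List.ofFn fun i : Fin (W n).length => u i)
    (hWbis : ∀ n, Bispecial u (W n))
    (hWmono : StrictMono fun n => (W n).length)
    (hWall : ∀ w : Word, (w = List.ofFn fun i : Fin w.length => u i) →
        Bispecial u w → ∃ n, w = W n) :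
    ∀ n, (∀ m, derivated u (W n) m = compPhi z n (usn n m)) ∧
      (z n = true → ∃ N₀, ∀ N, N₀ ≤ N → cnt (usn n) 1 N < cnt (usn n) 0 N) ∧
      (z n = false → ∃ N₀, ∀ N, N₀ ≤ N → cnt (usn n) 0 N < cnt (usn n) 1 N) := by
  have hu : ∀ n, u = substSeq (compPhi z n) (usn n) := fun n =>
    substSeq_eq_of_substImage (compPhi_ne_nil z n) (himg n)
  have hv := eq_substSeq_phi_of_forall_eq_substSeq_compPhi hu
  have hletters : ∀ n a, ∃ p, usn n p = a := fun n => exists_eq_of_isStandardSturmian (hstd n)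
  obtain rfl : u = usn 0 := by simpa [compPhi_zero, substSeq_singleton] using hu 0
  obtain rfl : W = bispecialPrefix z :=
    eq_bispecialPrefix_of_enumeration hv hletters (fun n => occAt_zero_iff.2 (hWpref n)) hWbis
      hWmono fun w hw => hWall w (occAt_zero_iff.1 hw)
  intro n
  have hfreq := cnt_substSeq_phi_add_one_lt (hletters (n + 1) (headLetter (z n)))
  rw [← hv n] at hfreq
  refine ⟨fun m => ?_, fun hz => by simpa [hz, headLetter] using hfreq,
    fun hz => by simpa [hz, headLetter, (by decide : (1 : ZMod 2) + 1 = 0)] using hfreq⟩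
  rw [hu n]
  exact derivated_substSeq (compPhi_ne_nil z n) (fun m => hu n ▸ occAt_bispecialPrefix_iff hv n m) m

/-- let `u` be a standard Sturmian sequence with directive sequence
`z ∈ {b,β}^ℕ` (infinitely many of each letter), i.e. `u = φ_{z₀⋯z_{n-1}}(u⁽ⁿ⁾)` with
`u⁽ⁿ⁾` standard Sturmian. Then for every `n`, the derivated sequence of `u` to its
`n`-th bispecial prefix `w⁽ⁿ⁾` is the standard Sturmian sequence `u⁽ⁿ⁾` (which has
directive sequence `zₙz_{n+1}⋯`), realized by: the `m`-th return word in the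
factorization of `u` is `φ_{z₀⋯z_{n-1}}` applied to the `m`-th letter of `u⁽ⁿ⁾`;
moreover if `zₙ = b` the more frequent return word is `φ_{z₀⋯z_{n-1}}(0)` (letter `0`
is eventually more frequent in `u⁽ⁿ⁾`), and if `zₙ = β` the roles are swapped. -/
theorem derivated_of_standard (z : ℕ → Bool) (u : ℕ → ZMod 2)
    (usn : ℕ → ℕ → ZMod 2)
    (hinfb : ∀ N, ∃ n, N ≤ n ∧ z n = true)
    (hinfβ : ∀ N, ∃ n, N ≤ n ∧ z n = false)
    (hstd : ∀ n, IsStandardSturmian (usn n))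
    (himg : ∀ n, SubstImage (compPhi z n) (usn n) u)
    (W : ℕ → Word)
    (hWpref : ∀ n, W n = List.ofFn fun i : Fin (W n).length => u i)
    (hWbis : ∀ n, Bispecial u (W n))
    (hWmono : StrictMono fun n => (W n).length)
    (hWall : ∀ w : Word, (w = List.ofFn fun i : Fin w.length => u i) →
        Bispecial u w → ∃ n, w = W n) :
    ∀ n, (∀ m, derivated u (W n) m = compPhi z n (usn n m)) ∧
      (z n = true → ∃ N₀, ∀ N, N₀ ≤ N → cnt (usn n) 1 N < cnt (usn n) 0 N) ∧
      (z n = false → ∃ N₀, ∀ N, N₀ ≤ N → cnt (usn n) 0 N < cnt (usn n) 1 N) :=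
  derivated_of_standard_general z u usn hstd himg W hWpref hWbis hWmono hWall
end

section
/- If the directive sequence z of a standard Sturmian sequence u has prefix b^k β for a positive integer k, then the letter 0 is more frequent in u and u can be written as a concatenation of the blocks 0^k 1 and 0^{k+1} 1. Symmetrically, if z has prefix β^k b then 1 is more frequent and u is a concatenation of blocks 1^k 0 and 1^{k+1} 0. -/
/-- The sequence `s` is a concatenation of blocks from `{A, B}`. -/
def ConcatOfBlocks (s : ℕ → ZMod 2) (A B : Word) : Prop :=
  ∃ d : ℕ → Word, (∀ m, d m = A ∨ d m = B) ∧
    ∀ n, ∃ K, (List.ofFn fun i : Fin n => s i) <+: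
                (List.ofFn fun i : Fin K => d i).flatten

namespace DPB

lemma zmod2_cases (x : ZMod 2) : x = 0 ∨ x = 1 := by revert x; decide

lemma zmod2_eq (a b x : ZMod 2) (hab : a ≠ b) (hx : x ≠ a) : x = b := by
  revert a b x; decide

lemma cnt_eq_count (s : ℕ → ZMod 2) (a : ZMod 2) (N : ℕ) :
    cnt s a N = (List.ofFn fun i : Fin N => s i).count a := by
  induction N with
  | zero => simp [cnt]
  | succ N ih =>
    rw [cnt, Finset.range_add_one, Finset.filter_insert]
    rw [List.ofFn_succ']
    simp only [List.concat_eq_append, List.count_append, Fin.coe_castSucc, Fin.val_last]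
    have ih' : ((Finset.range N).filter fun i => s i = a).card =
        (List.ofFn fun i : Fin N => s i).count a := ih
    by_cases h : s N = a
    · rw [if_pos h, Finset.card_insert_of_notMem (by simp), ih']
      simp [h]
    · rw [if_neg h, ih']
      have : List.count a [s N] = 0 := by
        rw [List.count_eq_zero]
        simp only [List.mem_singleton]
        exact fun hh => h hh.symm
      simp [this]

def dseq (v : ℕ → ZMod 2) (a b : ZMod 2) (k : ℕ) : ℕ → Word
  | 0 => List.replicate k a ++ [b]
  | m + 1 => if v m = a then List.replicate (k + 1) a ++ [b] else List.replicate k a ++ [b]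

def tl (v : ℕ → ZMod 2) (a : ZMod 2) : ℕ → Word
  | 0 => []
  | m + 1 => if v m = a then [a] else []

def Fl (v : ℕ → ZMod 2) (a b : ZMod 2) (k K : ℕ) : Word :=
  (List.ofFn fun i : Fin K => dseq v a b k i).flatten

lemma dseq_eq_tl (v : ℕ → ZMod 2) (a b : ZMod 2) (k m : ℕ) :
    dseq v a b k m = tl v a m ++ (List.replicate k a ++ [b]) := by
  cases m with
  | zero => simp [dseq, tl]
  | succ m =>
    by_cases h : v m = a <;> simp [dseq, tl, h, List.replicate_succ]

lemma Fl_succ (v : ℕ → ZMod 2) (a b : ZMod 2) (k K : ℕ) :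
    Fl v a b k (K + 1) = Fl v a b k K ++ dseq v a b k K := by
  rw [Fl, List.ofFn_succ']
  simp [Fl]

lemma Fl_mono (v : ℕ → ZMod 2) (a b : ZMod 2) (k : ℕ) {K K' : ℕ} (h : K ≤ K') :
    Fl v a b k K <+: Fl v a b k K' := by
  induction K' with
  | zero => rw [Nat.le_zero] at h; subst h; exact List.prefix_rfl
  | succ K' ih =>
    rcases Nat.lt_or_ge K (K' + 1) with h' | h'
    · exact (ih (by omega)).trans (by rw [Fl_succ]; exact List.prefix_append _ _)
    · have : K = K' + 1 := by omega
      subst this; exact List.prefix_rfl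

lemma L_eq (v : ℕ → ZMod 2) (a b : ZMod 2) (k K : ℕ) :
    ((List.ofFn fun i : Fin K => v i).flatMap
        fun x => (List.replicate k a ++ [b]) ++ if x = a then [a] else []) =
      Fl v a b k K ++ tl v a K := by
  induction K with
  | zero => simp [Fl, tl]
  | succ K ih =>
    rw [List.ofFn_succ']
    simp only [List.concat_eq_append, List.flatMap_append, Fin.coe_castSucc, Fin.val_last]
    rw [ih, Fl_succ, dseq_eq_tl]
    have : tl v a (K + 1) = if v K = a then [a] else [] := rfl
    simp [this, List.append_assoc]


lemma count_blk_b {a b : ZMod 2} (hab : a ≠ b) (j : ℕ) :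
    List.count b (List.replicate j a ++ [b]) = 1 := by
  rw [List.count_append, List.count_replicate]
  simp [hab]

lemma count_blk_a {a b : ZMod 2} (hab : a ≠ b) (j : ℕ) :
    List.count a (List.replicate j a ++ [b]) = j := by
  rw [List.count_append, List.count_replicate]
  have : List.count a [b] = 0 := by
    rw [List.count_eq_zero]
    simp only [List.mem_singleton]
    exact fun hh => hab hh
  simp [this]

lemma dseq_shape (v : ℕ → ZMod 2) (a b : ZMod 2) (k m : ℕ) :
    ∃ j, k ≤ j ∧ j ≤ k + 1 ∧ dseq v a b k m = List.replicate j a ++ [b] ∧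
      (∀ m', m = m' + 1 → v m' = a → j = k + 1) := by
  cases m with
  | zero => exact ⟨k, le_rfl, by omega, rfl, fun m' h => by omega⟩
  | succ m =>
    by_cases h : v m = a
    · exact ⟨k + 1, by omega, le_rfl, by simp [dseq, h], fun m' _ _ => rfl⟩
    · refine ⟨k, le_rfl, by omega, by simp [dseq, h], fun m' hm' hv => ?_⟩
      obtain rfl : m' = m := by omega
      exact absurd hv h

lemma count_b_Fl {a b : ZMod 2} (hab : a ≠ b) (v : ℕ → ZMod 2) (k K : ℕ) :
    List.count b (Fl v a b k K) = K := by
  induction K with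
  | zero => simp [Fl]
  | succ K ih =>
    obtain ⟨j, _, _, hblk, _⟩ := dseq_shape v a b k K
    rw [Fl_succ, List.count_append, ih, hblk, count_blk_b hab]

lemma count_a_Fl {a b : ZMod 2} (hab : a ≠ b) (v : ℕ → ZMod 2) (k K m₀ : ℕ)
    (hm₀ : v m₀ = a) :
    k * K ≤ List.count a (Fl v a b k K) ∧
      (m₀ + 2 ≤ K → k * K + 1 ≤ List.count a (Fl v a b k K)) := by
  induction K with
  | zero => simp [Fl]
  | succ K ih =>
    obtain ⟨j, hj1, hj2, hblk, hB⟩ := dseq_shape v a b k K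
    rw [Fl_succ, List.count_append, hblk, count_blk_a hab]
    constructor
    · have := ih.1
      rw [Nat.mul_succ]
      omega
    · intro hle
      rw [Nat.mul_succ]
      rcases Nat.lt_or_ge (m₀ + 2) (K + 1) with h' | h'
      · have := ih.2 (by omega)
        omega
      · have hK : K = m₀ + 1 := by omega
        have : j = k + 1 := hB m₀ hK hm₀
        have := ih.1
        omega

lemma prefix_block {a b : ZMod 2} (hab : a ≠ b) {q : Word} (j : ℕ)
    (hq : q <+: List.replicate j a ++ [b]) :
    (List.count b q = 0 ∧ List.count a q ≤ j) ∨ q = List.replicate j a ++ [b] := by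
  rw [List.prefix_iff_eq_take] at hq
  by_cases h : q.length ≤ j
  · left
    rw [List.take_append] at hq
    rw [List.length_replicate] at hq
    rw [List.take_replicate] at hq
    have h0 : q.length - j = 0 := by omega
    rw [h0] at hq
    simp only [List.take_zero, List.append_nil] at hq
    have hmin : min q.length j = q.length := by omega
    rw [hmin] at hq
    rw [hq]
    constructor
    · rw [List.count_eq_zero]
      simp only [List.mem_replicate]
      exact fun hh => hab hh.2.symm
    · rw [List.count_replicate]
      simp only [beq_self_eq_true, if_true]
      omega
  · right
    have hlen : (List.replicate j a ++ [b]).length = j + 1 := by simp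
    rw [hq]
    apply List.take_of_length_le
    omega

lemma main_count {a b : ZMod 2} (hab : a ≠ b) (v : ℕ → ZMod 2) (k m₀ : ℕ)
    (hk : 1 ≤ k) (hm₀ : v m₀ = a) :
    ∀ K p, p <+: Fl v a b k K →
      k * List.count b p ≤ List.count a p ∧
        (m₀ + 2 ≤ List.count b p → k * List.count b p + 1 ≤ List.count a p) := by
  intro K
  induction K with
  | zero =>
    intro p hp
    have : p = [] := by
      have : Fl v a b k 0 = [] := by simp [Fl]
      rw [this] at hp
      exact List.prefix_nil.mp hp
    subst this
    simp
  | succ K ih =>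
    intro p hp
    rw [Fl_succ] at hp
    rcases List.prefix_or_prefix_of_prefix (List.prefix_append _ _) hp with h | h
    · -- Fl K <+: p
      obtain ⟨q, rfl⟩ := h
      have hq : q <+: dseq v a b k K := (List.prefix_append_right_inj _).mp hp
      obtain ⟨j, hj1, hj2, hblk, hB⟩ := dseq_shape v a b k K
      rw [hblk] at hq
      have hFb := count_b_Fl hab v k K
      have hFa := count_a_Fl hab v k K m₀ hm₀
      have h1 : List.count b (List.replicate j a) = 0 := by
        rw [List.count_replicate]; simp [hab]
      have h3 : List.count a (List.replicate j a) = j := by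
        rw [List.count_replicate]; simp
      have h4 : List.count a [b] = 0 := by
        rw [List.count_eq_zero]
        simp only [List.mem_singleton]
        exact fun hh => hab hh
      rcases prefix_block hab j hq with ⟨hb0, ha0⟩ | rfl
      · simp only [List.count_append, hFb, hb0, Nat.add_zero]
        constructor
        · have := hFa.1
          omega
        · intro hle
          have := hFa.2 (by omega)
          omega
      · simp only [List.count_append, hFb, h1, h3, h4, List.count_cons_self,
          List.count_nil, Nat.add_zero, Nat.zero_add]
        constructor
        · have := hFa.1
          rw [Nat.mul_succ]
          omega
        · intro hle
          rw [Nat.mul_succ]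
          rcases Nat.lt_or_ge (m₀ + 2) (K + 1) with h' | h'
          · have := hFa.2 (by omega)
            omega
          · have hK : K = m₀ + 1 := by omega
            have : j = k + 1 := hB m₀ hK hm₀
            have := hFa.1
            omega
    · exact ih p h

lemma Fl_len (v : ℕ → ZMod 2) (a b : ZMod 2) (k K : ℕ) :
    (Fl v a b k K).length ≤ K * (k + 2) := by
  induction K with
  | zero => simp [Fl]
  | succ K ih =>
    obtain ⟨j, _, hj2, hblk, _⟩ := dseq_shape v a b k K
    rw [Fl_succ, List.length_append, hblk]
    have : (List.replicate j a ++ [b]).length = j + 1 := by simp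
    rw [this, Nat.succ_mul]
    omega


lemma core (u v : ℕ → ZMod 2) (a b : ZMod 2) (hab : a ≠ b) (k : ℕ) (hk : 1 ≤ k)
    (m₀ : ℕ) (hm₀ : v m₀ = a)
    (himg : ∀ n, ∃ K, (List.ofFn fun i : Fin n => u i) <+:
        ((List.ofFn fun i : Fin K => v i).flatMap
          fun x => (List.replicate k a ++ [b]) ++ if x = a then [a] else [])) :
    (∃ N₀, ∀ N, N₀ ≤ N → cnt u b N < cnt u a N) ∧
      ConcatOfBlocks u (List.replicate k a ++ [b]) (List.replicate (k + 1) a ++ [b]) := by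
  have hcover : ∀ n, ∃ K, (List.ofFn fun i : Fin n => u i) <+: Fl v a b k K := by
    intro n
    obtain ⟨K, hK⟩ := himg n
    refine ⟨K + 1, hK.trans ?_⟩
    rw [L_eq, Fl_succ]
    rw [List.prefix_append_right_inj]
    exact ⟨List.replicate k a ++ [b], (dseq_eq_tl v a b k K).symm⟩
  constructor
  · refine ⟨(m₀ + 2) * (k + 2), fun N hN => ?_⟩
    obtain ⟨K, hK⟩ := hcover N
    have hpM : (List.ofFn fun i : Fin N => u i) <+: Fl v a b k (max K (m₀ + 2)) :=
      hK.trans (Fl_mono v a b k (le_max_left _ _))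
    have hFm : Fl v a b k (m₀ + 2) <+: (List.ofFn fun i : Fin N => u i) := by
      apply List.prefix_of_prefix_length_le (Fl_mono v a b k (le_max_right K (m₀ + 2))) hpM
      have h1 := Fl_len v a b k (m₀ + 2)
      have h2 : (List.ofFn fun i : Fin N => u i).length = N := by simp
      omega
    have hcb : m₀ + 2 ≤ List.count b (List.ofFn fun i : Fin N => u i) := by
      have := hFm.count_le b
      rw [count_b_Fl hab] at this
      exact this
    have hmain := (main_count hab v k m₀ hk hm₀ (max K (m₀ + 2)) _ hpM).2 hcb
    rw [cnt_eq_count, cnt_eq_count]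
    have hmul : List.count b (List.ofFn fun i : Fin N => u i) ≤
        k * List.count b (List.ofFn fun i : Fin N => u i) :=
      Nat.le_mul_of_pos_left _ hk
    omega
  · refine ⟨dseq v a b k, fun m => ?_, fun n => ?_⟩
    · cases m with
      | zero => left; rfl
      | succ m =>
        by_cases h : v m = a
        · right; simp [dseq, h]
        · left; simp [dseq, h]
    · exact hcover n

lemma compPhi_b (z : ℕ → Bool) (k : ℕ) (hz : ∀ i < k, z i = true) :
    ∀ m, m ≤ k → compPhi z m 0 = [0] ∧
      compPhi z m 1 = List.replicate m (0 : ZMod 2) ++ [1] := by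
  intro m
  induction m with
  | zero => intro _; exact ⟨rfl, rfl⟩
  | succ m ih =>
    intro h
    obtain ⟨h0, h1⟩ := ih (by omega)
    have hz' : z m = true := hz m (by omega)
    have e : ∀ x : ZMod 2, compPhi z (m + 1) x = (phib x).flatMap (compPhi z m) := by
      intro x
      simp [compPhi, phi, hz']
    constructor
    · rw [e 0]
      have : phib 0 = [0] := by simp [phib]
      rw [this]
      simp [h0]
    · rw [e 1]
      have : phib 1 = [0, 1] := by simp [phib]
      rw [this]
      simp [h0, h1, List.replicate_succ]

lemma compPhi_sigma1 (z : ℕ → Bool) (k : ℕ) (hz : ∀ i < k, z i = true)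
    (hzk : z k = false) :
    compPhi z (k + 1) = fun x =>
      (List.replicate k (0 : ZMod 2) ++ [1]) ++ if x = 0 then [(0 : ZMod 2)] else [] := by
  funext x
  obtain ⟨h0, h1⟩ := compPhi_b z k hz k le_rfl
  have e : compPhi z (k + 1) x = (phibeta x).flatMap (compPhi z k) := by
    simp [compPhi, phi, hzk]
  rcases zmod2_cases x with rfl | rfl
  · rw [e]
    have : phibeta 0 = [1, 0] := by simp [phibeta]
    rw [this]
    simp [h0, h1]
  · rw [e]
    have : phibeta 1 = [1] := by simp [phibeta]
    rw [this]
    simp [h1]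

lemma compPhi_beta (z : ℕ → Bool) (k : ℕ) (hz : ∀ i < k, z i = false) :
    ∀ m, m ≤ k → compPhi z m 1 = [1] ∧
      compPhi z m 0 = List.replicate m (1 : ZMod 2) ++ [0] := by
  intro m
  induction m with
  | zero => intro _; exact ⟨rfl, rfl⟩
  | succ m ih =>
    intro h
    obtain ⟨h1, h0⟩ := ih (by omega)
    have hz' : z m = false := hz m (by omega)
    have e : ∀ x : ZMod 2, compPhi z (m + 1) x = (phibeta x).flatMap (compPhi z m) := by
      intro x
      simp [compPhi, phi, hz']
    constructor
    · rw [e 1]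
      have : phibeta 1 = [1] := by simp [phibeta]
      rw [this]
      simp [h1]
    · rw [e 0]
      have : phibeta 0 = [1, 0] := by simp [phibeta]
      rw [this]
      simp [h0, h1, List.replicate_succ]

lemma compPhi_sigma2 (z : ℕ → Bool) (k : ℕ) (hz : ∀ i < k, z i = false)
    (hzk : z k = true) :
    compPhi z (k + 1) = fun x =>
      (List.replicate k (1 : ZMod 2) ++ [0]) ++ if x = 1 then [(1 : ZMod 2)] else [] := by
  funext x
  obtain ⟨h1, h0⟩ := compPhi_beta z k hz k le_rfl
  have e : compPhi z (k + 1) x = (phib x).flatMap (compPhi z k) := by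
    simp [compPhi, phi, hzk]
  rcases zmod2_cases x with rfl | rfl
  · rw [e]
    have : phib 0 = [0] := by simp [phib]
    rw [this]
    simp [h0]
  · rw [e]
    have : phib 1 = [0, 1] := by simp [phib]
    rw [this]
    simp [h0, h1]

lemma exists_letter (v : ℕ → ZMod 2) (a b : ZMod 2) (hab : a ≠ b)
    (h : IsSturmian (consL b v)) : ∃ m, v m = a := by
  by_contra hc
  push_neg at hc
  have hv : ∀ m, v m = b := fun m => zmod2_eq a b (v m) hab (hc m)
  have hs : consL b v = fun _ => b := by
    funext n
    cases n with
    | zero => rfl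
    | succ n => exact hv n
  have h1 := h 1
  rw [hs] at h1
  have hset : {w : Word | w.length = 1 ∧ IsFactor (fun _ => b) w} = {[b]} := by
    ext w
    simp only [Set.mem_setOf_eq, Set.mem_singleton_iff]
    constructor
    · rintro ⟨hl, m, hm⟩
      rw [OccAt] at hm
      have hw : w = List.replicate w.length b := hm.trans (List.ofFn_const _ _)
      rw [hl] at hw
      simpa using hw
    · rintro rfl
      refine ⟨rfl, 0, ?_⟩
      rw [OccAt]
      simp
  rw [Cplx, hset, Set.ncard_singleton] at h1
  omega

end DPB

/-- if the directive sequence `z` of a standard Sturmian sequence `u`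
has prefix `bᵏβ` (`k ≥ 1`), then `0` is more frequent in `u` and `u` is a
concatenation of blocks `0ᵏ1` and `0^{k+1}1`; symmetrically for prefix `βᵏb`. -/
theorem directive_prefix_blocks (z : ℕ → Bool) (u : ℕ → ZMod 2)
    (usn : ℕ → ℕ → ZMod 2) (k : ℕ) (hk : 1 ≤ k)
    (hstd : ∀ n, IsStandardSturmian (usn n))
    (himg : ∀ n, SubstImage (compPhi z n) (usn n) u) :
    (((∀ i < k, z i = true) ∧ z k = false) →
      (∃ N₀, ∀ N, N₀ ≤ N → cnt u 1 N < cnt u 0 N) ∧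
      ConcatOfBlocks u (List.replicate k (0 : ZMod 2) ++ [1])
        (List.replicate (k + 1) (0 : ZMod 2) ++ [1])) ∧
    (((∀ i < k, z i = false) ∧ z k = true) →
      (∃ N₀, ∀ N, N₀ ≤ N → cnt u 0 N < cnt u 1 N) ∧
      ConcatOfBlocks u (List.replicate k (1 : ZMod 2) ++ [0])
        (List.replicate (k + 1) (1 : ZMod 2) ++ [0])) := by
  constructor
  · rintro ⟨hz, hzk⟩
    have hσ := DPB.compPhi_sigma1 z k hz hzk
    have him := himg (k + 1)
    have him' : ∀ n, ∃ K, (List.ofFn fun i : Fin n => u i) <+: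
        ((List.ofFn fun i : Fin K => usn (k + 1) i).flatMap
          fun x => (List.replicate k (0 : ZMod 2) ++ [1]) ++
            if x = 0 then [(0 : ZMod 2)] else []) := by
      intro n
      obtain ⟨K, hK⟩ := him n
      exact ⟨K, by rwa [hσ] at hK⟩
    obtain ⟨m₀, hm₀⟩ := DPB.exists_letter (usn (k + 1)) 0 1 (by decide) (hstd (k + 1)).2
    exact DPB.core u (usn (k + 1)) 0 1 (by decide) k hk m₀ hm₀ him'
  · rintro ⟨hz, hzk⟩
    have hσ := DPB.compPhi_sigma2 z k hz hzk
    have him := himg (k + 1)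
    have him' : ∀ n, ∃ K, (List.ofFn fun i : Fin n => u i) <+:
        ((List.ofFn fun i : Fin K => usn (k + 1) i).flatMap
          fun x => (List.replicate k (1 : ZMod 2) ++ [0]) ++
            if x = 1 then [(1 : ZMod 2)] else []) := by
      intro n
      obtain ⟨K, hK⟩ := him n
      exact ⟨K, by rwa [hσ] at hK⟩
    obtain ⟨m₀, hm₀⟩ := DPB.exists_letter (usn (k + 1)) 1 0 (by decide) (hstd (k + 1)).1
    exact DPB.core u (usn (k + 1)) 1 0 (by decide) k hk m₀ hm₀ him'
end

section
/- Let u be a standard Sturmian sequence whose directive sequence z ∈ {b,β}^ℕ is eventually periodic with period Q and preperiod p. Then there exists q ∈ {1,2,3} such that the sequence of matrices (P^(n))_{n∈ℕ} is eventually periodic with period qQ, where P^(n) = M_{z_0} M_{z_1} ... M_{z_{n-1}} O_{z_n} mod 2, O_b = identity, O_β = [[0,1],[1,0]]. -/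
/-- The incidence matrix mod 2 of the elementary morphism labelled by `c`
(`true = b`, `false = β`). -/
def Mm (c : Bool) : Matrix (Fin 2) (Fin 2) (ZMod 2) :=
  if c then !![1, 1; 0, 1] else !![1, 0; 1, 1]

/-- The matrix `O_b = I` resp. `O_β = [[0,1],[1,0]]`. -/
def Om (c : Bool) : Matrix (Fin 2) (Fin 2) (ZMod 2) :=
  if c then 1 else !![0, 1; 1, 0]

/-- The matrix `P⁽ⁿ⁾ = M_{z₀} M_{z₁} ⋯ M_{z_{n-1}} O_{zₙ} (mod 2)` of Parikh vectors
mod 2 of the return words to the `n`-th bispecial prefix. -/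
def Pmat (z : ℕ → Bool) (n : ℕ) : Matrix (Fin 2) (Fin 2) (ZMod 2) :=
  (((List.range n).map fun i => Mm (z i)).prod) * Om (z n)

private lemma Mm_sq (c : Bool) : Mm c * Mm c = 1 := by cases c <;> decide

private lemma Mm_det (c : Bool) : (Mm c).det = 1 := by cases c <;> decide

private lemma key : ∀ H : Matrix (Fin 2) (Fin 2) (ZMod 2), H.det = 1 → H ^ 2 = 1 ∨ H ^ 3 = 1 := by
  decide

/-- product of the matrices over one period starting at `n` -/
private def Hm (z : ℕ → Bool) (Q n : ℕ) : Matrix (Fin 2) (Fin 2) (ZMod 2) :=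
  ((List.range Q).map fun j => Mm (z (n + j))).prod

private lemma Hm_det (z : ℕ → Bool) (Q n : ℕ) : (Hm z Q n).det = 1 := by
  unfold Hm
  induction Q with
  | zero => simp
  | succ k ih =>
      rw [List.range_succ, List.map_append, List.prod_append]
      simp [Matrix.det_mul, ih, Mm_det]

private lemma prodA (z : ℕ → Bool) (Q n : ℕ) :
    ((List.range (n + Q)).map fun i => Mm (z i)).prod
      = (((List.range n).map fun i => Mm (z i)).prod) * Hm z Q n := by
  rw [List.range_add, List.map_append, List.prod_append, List.map_map]
  rfl

/-- if the directive sequence `z` is eventually periodic with period `Q`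
(and preperiod `p`), then there is `q ∈ {1,2,3}` such that the sequence of matrices
`(P⁽ⁿ⁾)ₙ` is eventually periodic with period `q·Q`. -/
theorem Pmat_eventually_periodic (z : ℕ → Bool) (p Q : ℕ) (hQ : 1 ≤ Q)
    (hper : ∀ n, p ≤ n → z (n + Q) = z n) :
    ∃ q, q ∈ ({1, 2, 3} : Set ℕ) ∧
      ∃ N, ∀ n, N ≤ n → Pmat z (n + q * Q) = Pmat z n := by
  -- shift invariance of H
  have Hshift : ∀ n, p ≤ n → Hm z Q (n + Q) = Hm z Q n := by
    intro n hn
    unfold Hm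
    congr 1
    apply List.map_congr_left
    intro j _
    have : z (n + j + Q) = z (n + j) := hper _ (le_trans hn (Nat.le_add_right _ _))
    rw [show n + Q + j = n + j + Q by ring, this]
  -- semiconjugation
  have Hconj : ∀ n, p ≤ n → Mm (z n) * Hm z Q (n + 1) = Hm z Q n * Mm (z n) := by
    intro n hn
    obtain ⟨k, rfl⟩ : ∃ k, Q = k + 1 := ⟨Q - 1, by omega⟩
    set T : Matrix (Fin 2) (Fin 2) (ZMod 2) :=
      ((List.range k).map fun j => Mm (z (n + 1 + j))).prod with hT
    have h2 : z (n + 1 + k) = z n := by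
      have := hper n hn
      rw [show n + 1 + k = n + (k + 1) by ring, this]
    have hL : Hm z (k + 1) (n + 1) = T * Mm (z n) := by
      unfold Hm
      rw [List.range_succ, List.map_append, List.prod_append]
      simp [hT, h2]
    have hR : Hm z (k + 1) n = Mm (z n) * T := by
      unfold Hm
      rw [List.range_succ_eq_map, List.map_cons, List.prod_cons, List.map_map]
      have h1 : ((List.range k).map ((fun j => Mm (z (n + j))) ∘ Nat.succ))
          = (List.range k).map fun j => Mm (z (n + 1 + j)) := by
        apply List.map_congr_left; intro j _
        simp only [Function.comp]
        rw [show n + j.succ = n + 1 + j from by omega]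
      rw [h1]
      simp [hT]
    rw [hL, hR, mul_assoc]
  -- main argument, for any q with (Hm p)^q = 1
  have main : ∀ q, Hm z Q p ^ q = 1 → ∀ n, p ≤ n → Pmat z (n + q * Q) = Pmat z n := by
    intro q hq1
    have Hpow : ∀ n, p ≤ n → Hm z Q n ^ q = 1 := by
      intro n hn
      induction n, hn using Nat.le_induction with
      | base => exact hq1
      | succ n hn ih =>
          have hc : SemiconjBy (Mm (z n)) (Hm z Q (n + 1)) (Hm z Q n) := Hconj n hn
          have h2 := (hc.pow_right q).eq
          calc Hm z Q (n + 1) ^ q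
              = (Mm (z n) * Mm (z n)) * Hm z Q (n + 1) ^ q := by rw [Mm_sq, one_mul]
            _ = Mm (z n) * (Mm (z n) * Hm z Q (n + 1) ^ q) := by rw [mul_assoc]
            _ = Mm (z n) * (Hm z Q n ^ q * Mm (z n)) := by rw [h2]
            _ = Mm (z n) * Mm (z n) := by rw [ih, one_mul]
            _ = 1 := Mm_sq _
    have zshift : ∀ k n, p ≤ n → z (n + k * Q) = z n := by
      intro k
      induction k with
      | zero => simp
      | succ m ih =>
          intro n hn
          rw [show n + (m + 1) * Q = (n + m * Q) + Q by ring,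
            hper _ (le_trans hn (Nat.le_add_right _ _)), ih n hn]
    have Hshiftk : ∀ k n, p ≤ n → Hm z Q (n + k * Q) = Hm z Q n := by
      intro k
      induction k with
      | zero => simp
      | succ m ih =>
          intro n hn
          rw [show n + (m + 1) * Q = (n + m * Q) + Q by ring,
            Hshift _ (le_trans hn (Nat.le_add_right _ _)), ih n hn]
    have Ashift : ∀ k n, p ≤ n →
        ((List.range (n + k * Q)).map fun i => Mm (z i)).prod
          = (((List.range n).map fun i => Mm (z i)).prod) * Hm z Q n ^ k := by
      intro k
      induction k with
      | zero => simp
      | succ m ih =>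
          intro n hn
          rw [show n + (m + 1) * Q = (n + m * Q) + Q by ring, prodA, ih n hn,
            Hshiftk m n hn, pow_succ, mul_assoc]
    intro n hn
    unfold Pmat
    rw [Ashift q n hn, Hpow n hn, mul_one, zshift q n hn]
  obtain hk | hk := key (Hm z Q p) (Hm_det z Q p)
  · exact ⟨2, by simp, p, main 2 hk⟩
  · exact ⟨3, by simp, p, main 3 hk⟩
end
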